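/- arXiv:1910.13549 — 10 statements merged into one kernel-verified Lean document; each statement's English description precedes it below -/
import Mathlib

section
/- Let n ≥ 1 and let e_1, …, e_n be the elementary symmetric polynomials in the variables x_1, …, x_n over ℝ. Let J be the n×n matrix whose (m,i) entry is the partial derivative ∂e_m/∂x_i. Then det(J) equals, up to sign, the Vandermonde polynomial ∏_{1 ≤ i < j ≤ n} (x_i − x_j); in particular, det(J) is a nonzero polynomial. -/
open Finset MvPolynomial

/-- The `m`-th elementary symmetric polynomial of the values `v i` for `i` in the finite set
`s`. -/
noncomputable def esymOn {σ R : Type*} [CommSemiring R] (s : Finset σ) (m : ℕ) (v : σ → R) : R :=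
  ∑ t ∈ Finset.powersetCard m s, ∏ i ∈ t, v i

/-- The Jacobian matrix of the elementary symmetric polynomials `e₁, …, eₙ` in the variables
`x₁, …, xₙ`; its `(m, i)` entry is `∂ e_{m+1} / ∂ x_i`. -/
noncomputable def jac0 (n : ℕ) : Matrix (Fin n) (Fin n) (MvPolynomial (Fin n) ℝ) :=
  Matrix.of fun m i =>
    pderiv i (esymOn Finset.univ (m.1 + 1) (X : Fin n → MvPolynomial (Fin n) ℝ))

/-!
Since `∂e_{m+1}/∂x_i = e_m(x₁, …, x̂ᵢ, …, xₙ)`, Vieta's formula gives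
`∑ₘ (-1)ᵐ xⱼ^(n-1-m) ∂e_{m+1}/∂xᵢ = ∏_{l ≠ i} (xⱼ - x_l)`, which vanishes unless `j = i`.
So the signed, reversed Vandermonde matrix `V` with entries `(-1)ᵐ xⱼ^(n-1-m)` turns `J` into the
diagonal matrix with entries `∏_{l ≠ i} (xᵢ - x_l)`, whose determinant is
`det V · ∏_{i<j} (xᵢ - xⱼ)`; cancelling the nonzero `det V` gives `det J = ∏_{i<j} (xᵢ - xⱼ)`.
-/

open Matrix

lemma pderiv_prod_X_of_notMem {σ R : Type*} [CommSemiring R] {i : σ} {u : Finset σ}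
    (hi : i ∉ u) : pderiv i (∏ j ∈ u, (X j : MvPolynomial σ R)) = 0 := by
  classical
  induction u using Finset.induction_on with
  | empty => simp
  | insert a u ha ih =>
    rw [mem_insert, not_or] at hi
    rw [prod_insert ha, pderiv_mul, pderiv_X_of_ne (Ne.symm hi.1), ih hi.2]
    simp

lemma pderiv_esymOn_insert {σ R : Type*} [CommSemiring R] [DecidableEq σ] {i : σ} {t : Finset σ}
    (hi : i ∉ t) (m : ℕ) :
    pderiv i (esymOn (insert i t) (m + 1) (X : σ → MvPolynomial σ R)) = esymOn t m X := by
  have hfresh : ∀ k, ∀ u ∈ powersetCard k t, i ∉ u :=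
    fun _ u hu h => hi ((mem_powersetCard.1 hu).1 h)
  have hdisj : Disjoint (powersetCard (m + 1) t) ((powersetCard m t).image (insert i)) := by
    refine disjoint_left.2 fun u hu hu' => hfresh _ u hu ?_
    obtain ⟨w, -, rfl⟩ := mem_image.1 hu'
    exact mem_insert_self i w
  have hinj : Set.InjOn (insert i) (powersetCard m t : Set (Finset σ)) := fun u hu w hw h => by
    rw [← erase_insert (hfresh m u hu), h, erase_insert (hfresh m w hw)]
  rw [esymOn, powersetCard_succ_insert hi, sum_union hdisj, sum_image hinj, map_add, map_sum,
    map_sum, sum_eq_zero fun u hu => pderiv_prod_X_of_notMem (hfresh _ u hu), zero_add, esymOn]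
  refine sum_congr rfl fun u hu => ?_
  rw [prod_insert (hfresh m u hu), pderiv_mul, pderiv_X_self,
    pderiv_prod_X_of_notMem (hfresh m u hu)]
  simp

lemma prod_sub_eq_sum_esymOn {σ R : Type*} [CommRing R] (s : Finset σ) (v : σ → R) (x : R) :
    ∏ l ∈ s, (x - v l) = ∑ k ∈ range (#s + 1), (-1) ^ k * esymOn s k v * x ^ (#s - k) := by
  have h := congrArg (Polynomial.eval x) (Multiset.prod_X_sub_X_eq_sum_esymm (s.val.map v))
  simpa [Polynomial.eval_prod, Polynomial.eval_finsetSum, ← Finset.esymm_map_val, esymOn,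
    mul_assoc] using h

noncomputable def esymOnComplMatrix {R : Type*} [CommSemiring R] {n : ℕ} (v : Fin n → R) :
    Matrix (Fin n) (Fin n) R :=
  Matrix.of fun m i => esymOn ({i}ᶜ : Finset (Fin n)) m.1 v

section

variable {R : Type*} [CommRing R] {n : ℕ}

lemma projVandermonde_neg_one_mul_esymOnComplMatrix (v : Fin n → R) :
    projVandermonde (fun _ => -1) v * esymOnComplMatrix v =
      diagonal fun i => ∏ l ∈ ({i}ᶜ : Finset (Fin n)), (v i - v l) := by
  ext j i
  have hcard : #({i}ᶜ : Finset (Fin n)) = n - 1 := by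
    rw [card_compl, card_singleton, Fintype.card_fin]
  have hentry : (projVandermonde (fun _ => -1) v * esymOnComplMatrix v) j i =
      ∏ l ∈ ({i}ᶜ : Finset (Fin n)), (v j - v l) := by
    rw [prod_sub_eq_sum_esymOn, hcard, Nat.sub_add_cancel i.pos, mul_apply,
      ← Fin.sum_univ_eq_sum_range (fun k => (-1) ^ k * esymOn {i}ᶜ k v * v j ^ (n - 1 - k))]
    refine sum_congr rfl fun m _ => ?_
    rw [projVandermonde_apply, esymOnComplMatrix, of_apply, Fin.val_rev, Nat.sub_sub, add_comm 1]
    ring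
  rw [hentry]
  rcases eq_or_ne j i with rfl | hji
  · rw [diagonal_apply_eq]
  · rw [diagonal_apply_ne _ hji]
    exact prod_eq_zero (mem_compl.2 (by simpa using hji)) (sub_self _)

lemma det_projVandermonde_neg_one (v : Fin n → R) :
    (projVandermonde (fun _ => -1) v).det = (vandermonde v).det := by
  simp only [det_projVandermonde, det_vandermonde, neg_one_mul, neg_sub_neg]

lemma prod_prod_compl_sub (v : Fin n → R) :
    ∏ i, ∏ l ∈ ({i}ᶜ : Finset (Fin n)), (v i - v l) =
      (∏ i, ∏ j ∈ Ioi i, (v i - v j)) * (vandermonde v).det := by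
  rw [det_vandermonde, ← prod_mul_distrib, ← prod_prod_Ioi_mul_eq_prod_prod_off_diag]
  simp only [prod_mul_distrib]

lemma det_esymOnComplMatrix [IsDomain R] {v : Fin n → R} (hv : Function.Injective v) :
    (esymOnComplMatrix v).det = ∏ i, ∏ j ∈ Ioi i, (v i - v j) := by
  have h := congrArg det (projVandermonde_neg_one_mul_esymOnComplMatrix v)
  rw [det_mul, det_diagonal, det_projVandermonde_neg_one, prod_prod_compl_sub, mul_comm] at h
  exact mul_right_cancel₀ (det_vandermonde_ne_zero_iff.2 hv) h

end

lemma jac0_eq_esymOnComplMatrix (n : ℕ) :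
    jac0 n = esymOnComplMatrix (X : Fin n → MvPolynomial (Fin n) ℝ) := by
  ext m i
  rw [jac0, esymOnComplMatrix, of_apply, of_apply, ← insert_compl_self i,
    pderiv_esymOn_insert (by simp)]

theorem stmt0_general (n : ℕ) :
    ((jac0 n).det = ∏ i : Fin n, ∏ j ∈ Finset.Ioi i, (X i - X j) ∨
      (jac0 n).det = -∏ i : Fin n, ∏ j ∈ Finset.Ioi i, (X i - X j)) ∧
    (jac0 n).det ≠ 0 := by
  have hdet : (jac0 n).det = ∏ i : Fin n, ∏ j ∈ Finset.Ioi i, (X i - X j) := by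
    rw [jac0_eq_esymOnComplMatrix, det_esymOnComplMatrix (X_injective (σ := Fin n) (R := ℝ))]
  refine ⟨Or.inl hdet, hdet ▸ prod_ne_zero_iff.2 fun i _ => prod_ne_zero_iff.2 fun j hj => ?_⟩
  exact sub_ne_zero.2 (X_injective.ne (mem_Ioi.1 hj).ne)

/-- The determinant of the Jacobian of `e₁, …, eₙ` equals, up to sign, the Vandermonde
polynomial `∏_{i < j} (xᵢ - xⱼ)`; in particular it is a nonzero polynomial. -/
theorem stmt0 (n : ℕ) (hn : 1 ≤ n) :
    ((jac0 n).det = ∏ i : Fin n, ∏ j ∈ Finset.Ioi i, (X i - X j) ∨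
      (jac0 n).det = -∏ i : Fin n, ∏ j ∈ Finset.Ioi i, (X i - X j)) ∧
    (jac0 n).det ≠ 0 :=
  stmt0_general n
end

section
/- Let n ≥ 3 and 2 ≤ p ≤ n. In the polynomial ring ℝ[x_1, …, x_n][X], let M be the n×n matrix with M_{i,i} = X + x_i for 1 ≤ i ≤ n, M_{i+1,i} = −x_i for 1 ≤ i ≤ n−1, M_{1,n} = −x_n, and all other entries 0. Then: (i) det(M) = ∏_{i=1}^n (X + x_i) − ∏_{i=1}^n x_i = X^n + ∑_{m=1}^{n−1} e_m X^{n−m}, where e_m is the m-th elementary symmetric polynomial in x_1, …, x_n; and (ii) the determinant of the (n−1)×(n−1) submatrix of M obtained by deleting row 1 and column p equals (−1)^{p−1} (x_1 x_2 ⋯ x_{p−1}) · ∏_{j=p+1}^n (X + x_j). -/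
open Finset MvPolynomial

/-- The map `Fin (n-1) → Fin n` that skips the index `r` (used to delete row/column `r`). -/
def delIdx (n r : ℕ) (k : Fin (n - 1)) : Fin n :=
  if k.1 < r then ⟨k.1, by have := k.isLt; omega⟩ else ⟨k.1 + 1, by have := k.isLt; omega⟩

/-- The matrix `X•I - A` for the `n`-compartment cycle model with no leaks, written over
`(ℝ[x₁,…,xₙ])[X]`; variable `x i` (0-based `i`) stands for the rate constant `k_{i+2,i+1}`
(indices mod `n`).  Diagonal entries are `X + xᵢ`, the subdiagonal entries are `-xᵢ`, the
top-right corner is `-xₙ`, and all other entries are `0`. -/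
noncomputable def M1 (n : ℕ) :
    Matrix (Fin n) (Fin n) (Polynomial (MvPolynomial (Fin n) ℝ)) :=
  Matrix.of fun i j =>
    if i = j then Polynomial.X + Polynomial.C (X j)
    else if i.1 = j.1 + 1 ∨ (i.1 = 0 ∧ j.1 = n - 1) then -Polynomial.C (X j : MvPolynomial (Fin n) ℝ)
    else 0

/-!
Deleting row 1 and column `c` of `M` leaves a block diagonal matrix: on the indices before `c` it
is upper bidiagonal with diagonal `-x₁, …, -x_{c-1}`, on the others lower bidiagonal with diagonal
`X + x_{c+1}, …, X + xₙ`. So this minor is the product of those diagonal entries. Only the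
entries in columns 1 and `n` of the first row of `M` are nonzero, so expanding along that row gives
`det M = ∏ (X + xᵢ) - ∏ xᵢ`, and Vieta's formula expands the product in the elementary symmetric
polynomials, its constant term cancelling `∏ xᵢ`.
-/

theorem Matrix.det_of_blockTriangular_of_injective {m R α : Type*} [Fintype m] [DecidableEq m]
    [CommRing R] [LinearOrder α] {M : Matrix m m R} {b : m → α} (hM : M.BlockTriangular b)
    (hb : Function.Injective b) : M.det = ∏ i, M i i :=
  letI : LinearOrder m := LinearOrder.lift' b hb
  Matrix.det_of_isUpperTriangular hM

section CycleMatrix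

variable {R : Type*} [CommRing R]

def cycleMatrix (n : ℕ) (d x : Fin n → R) : Matrix (Fin n) (Fin n) R :=
  Matrix.of fun i j =>
    if i = j then d j else if i.1 = j.1 + 1 ∨ (i.1 = 0 ∧ j.1 = n - 1) then -x j else 0

theorem cycleMatrix_apply_of_ne_zero {n : ℕ} (d x : Fin n → R) {i j : Fin n} (hi : (i : ℕ) ≠ 0) :
    cycleMatrix n d x i j =
      if (i : ℕ) = j then d j else if (i : ℕ) = (j : ℕ) + 1 then -x j else 0 := by
  simp [cycleMatrix, Fin.ext_iff, hi]

variable {m n : ℕ} (d x : Fin n → R) {c : ℕ} (r q : Fin m → Fin n)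

theorem det_submatrix_cycleMatrix_eq_prod (hr : ∀ k, (r k : ℕ) = (k : ℕ) + 1)
    (hq : ∀ k, (q k : ℕ) = if (k : ℕ) < c then (k : ℕ) else (k : ℕ) + 1) :
    ((cycleMatrix n d x).submatrix r q).det =
      ∏ k : Fin m, if (k : ℕ) < c then -x (q k) else d (q k) := by
  set A := (cycleMatrix n d x).submatrix r q
  have hA : ∀ k l, A k l =
      if (r k : ℕ) = q l then d (q l) else if (r k : ℕ) = (q l : ℕ) + 1 then -x (q l) else 0 :=
    fun k l => cycleMatrix_apply_of_ne_zero d x (by rw [hr]; omega)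
  -- Ordering the indices `< c` increasingly and the others decreasingly makes `A` triangular.
  set b : Fin m → ℤ := fun k => if (k : ℕ) < c then (k : ℤ) else -(k : ℤ)
  have htri : A.BlockTriangular b := by
    intro k l hlt
    simp only [b] at hlt
    rw [hA, hr, hq]
    split_ifs at hlt ⊢ <;> first | rfl | omega
  have hb : Function.Injective b := by
    intro k l h
    simp only [b] at h
    ext
    split_ifs at h <;> omega
  rw [Matrix.det_of_blockTriangular_of_injective htri hb]
  refine Finset.prod_congr rfl fun k _ => ?_
  rw [hA, hr, hq]
  split_ifs <;> first | rfl | omega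

theorem det_submatrix_cycleMatrix (hmn : m + 1 = n) (hc : c ≤ m)
    (hr : ∀ k, (r k : ℕ) = (k : ℕ) + 1)
    (hq : ∀ k, (q k : ℕ) = if (k : ℕ) < c then (k : ℕ) else (k : ℕ) + 1) :
    ((cycleMatrix n d x).submatrix r q).det =
      (-1) ^ c * (∏ i ∈ univ.filter (fun i : Fin n => (i : ℕ) < c), x i) *
        ∏ j ∈ univ.filter (fun j : Fin n => c < (j : ℕ)), d j := by
  have hq_inj : Function.Injective q := by
    intro k l h
    have h' := congrArg Fin.val h
    rw [hq, hq] at h'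
    ext
    split_ifs at h' <;> omega
  rw [det_submatrix_cycleMatrix_eq_prod d x r q hr hq, Finset.prod_ite, Finset.prod_neg,
    Fin.card_filter_val_lt, min_eq_right hc]
  congr 1
  · congr 1
    refine Finset.prod_nbij q ?_ hq_inj.injOn ?_ fun _ _ => rfl
    · intro k hk
      simp only [Finset.mem_filter, Finset.mem_univ, true_and] at hk ⊢
      rw [hq, if_pos hk]
      exact hk
    · intro i hi
      simp only [Finset.coe_filter, Finset.mem_univ, true_and, Set.mem_ofPred_eq] at hi
      refine ⟨⟨i, by omega⟩, by simpa using hi, Fin.ext ?_⟩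
      rw [hq, if_pos hi]
  · refine Finset.prod_nbij q ?_ hq_inj.injOn ?_ fun _ _ => rfl
    · intro k hk
      simp only [Finset.mem_filter, Finset.mem_univ, true_and] at hk ⊢
      rw [hq, if_neg hk]
      omega
    · intro i hi
      simp only [Finset.coe_filter, Finset.mem_univ, true_and, Set.mem_ofPred_eq] at hi
      refine ⟨⟨i - 1, by omega⟩, by simp; omega, Fin.ext ?_⟩
      rw [hq, if_neg (by simp; omega)]
      simp; omega

theorem det_cycleMatrix (hn : 2 ≤ n) : (cycleMatrix n d x).det = ∏ i, d i - ∏ i, x i := by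
  obtain ⟨N, rfl⟩ : ∃ N, n = N + 1 := ⟨n - 1, by omega⟩
  have hrow : ∀ j : Fin (N + 1), j ≠ 0 ∧ j ≠ Fin.last N → cycleMatrix (N + 1) d x 0 j = 0 := by
    rintro j ⟨hj0, hjN⟩
    rw [Ne, Fin.ext_iff] at hj0 hjN
    simp only [cycleMatrix, Matrix.of_apply, Fin.ext_iff, Fin.val_zero, Fin.val_last] at hj0 hjN ⊢
    rw [if_neg (by omega), if_neg (by omega)]
  have hminor_first : ((cycleMatrix (N + 1) d x).submatrix Fin.succ (Fin.succAbove 0)).det =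
      ∏ j : Fin N, d j.succ := by
    rw [det_submatrix_cycleMatrix d x _ _ rfl (Nat.zero_le N) Fin.val_succ (fun k => by simp)]
    simp [Finset.prod_filter, Fin.prod_univ_succ]
  have hminor_last :
      ((cycleMatrix (N + 1) d x).submatrix Fin.succ (Fin.succAbove (Fin.last N))).det =
        (-1) ^ N * ∏ i : Fin N, x i.castSucc := by
    rw [det_submatrix_cycleMatrix (c := N) d x _ _ rfl le_rfl Fin.val_succ (fun k => by simp)]
    simp [Finset.prod_filter, Fin.prod_univ_castSucc, fun i : Fin N => not_lt.2 i.isLt.le]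
  have hentry_first : cycleMatrix (N + 1) d x 0 0 = d 0 := by simp [cycleMatrix]
  have hentry_last : cycleMatrix (N + 1) d x 0 (Fin.last N) = -x (Fin.last N) := by
    simp only [cycleMatrix, Matrix.of_apply, Fin.ext_iff, Fin.val_zero, Fin.val_last]
    rw [if_neg (by omega), if_pos (by simp)]
  have hsign : ((-1 : R) ^ N) ^ 2 = 1 := by rw [← pow_mul, pow_mul', neg_one_sq, one_pow]
  rw [Matrix.det_succ_row_zero, Fintype.sum_eq_add 0 (Fin.last N) (by simp [Fin.ext_iff]; omega)
    (fun j hj => by rw [hrow j hj, mul_zero, zero_mul]), hminor_first, hminor_last,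
    hentry_first, hentry_last, Fin.prod_univ_succ d, Fin.prod_univ_castSucc x, Fin.val_zero,
    Fin.val_last]
  linear_combination (-(x (Fin.last N)) * ∏ i : Fin N, x i.castSucc) * hsign

end CycleMatrix

section ElementarySymmetric

variable {σ R : Type*} [CommSemiring R]

theorem esymOn_zero (s : Finset σ) (v : σ → R) : esymOn s 0 v = 1 := by
  simp [esymOn]

theorem esymOn_card (s : Finset σ) (v : σ → R) : esymOn s #s v = ∏ i ∈ s, v i := by
  rw [esymOn, Finset.powersetCard_self, Finset.sum_singleton]

theorem prod_X_add_C_eq_sum_esymOn (s : Finset σ) (v : σ → R) :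
    ∏ i ∈ s, (Polynomial.X + Polynomial.C (v i)) =
      ∑ j ∈ range (#s + 1), Polynomial.C (esymOn s j v) * Polynomial.X ^ (#s - j) := by
  have h := Multiset.prod_X_add_C_eq_sum_esymm (s.val.map v)
  simp only [Multiset.map_map, Multiset.card_map, Finset.esymm_map_val] at h
  exact h

end ElementarySymmetric

theorem prod_X_add_C_sub_C_prod_eq_sum_esymOn {σ R : Type*} [CommRing R] {s : Finset σ}
    (hs : s.Nonempty) (v : σ → R) :
    ∏ i ∈ s, (Polynomial.X + Polynomial.C (v i)) - Polynomial.C (∏ i ∈ s, v i) =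
      Polynomial.X ^ #s + ∑ j ∈ Icc 1 (#s - 1),
        Polynomial.C (esymOn s j v) * Polynomial.X ^ (#s - j) := by
  have hcard := hs.card_pos
  rw [prod_X_add_C_eq_sum_esymOn, ← esymOn_card, Finset.sum_range_succ, Finset.range_eq_Ico,
    Finset.sum_eq_sum_Ico_succ_bot (by omega), esymOn_zero,
    show Finset.Ico (0 + 1) #s = Finset.Icc 1 (#s - 1) by ext; simp; omega]
  simp

theorem delIdx_val (n r : ℕ) (k : Fin (n - 1)) :
    (delIdx n r k : ℕ) = if (k : ℕ) < r then (k : ℕ) else (k : ℕ) + 1 := by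
  unfold delIdx
  split_ifs <;> rfl

theorem M1_eq_cycleMatrix (n : ℕ) :
    M1 n = cycleMatrix n (fun j => Polynomial.X + Polynomial.C (X j))
      (fun j => Polynomial.C (X j : MvPolynomial (Fin n) ℝ)) :=
  rfl

theorem det_M1 {n : ℕ} (hn : 2 ≤ n) :
    (M1 n).det = ∏ i : Fin n, (Polynomial.X + Polynomial.C (X i)) -
      Polynomial.C (∏ i : Fin n, X i) := by
  rw [M1_eq_cycleMatrix, det_cycleMatrix _ _ hn, map_prod]

theorem det_submatrix_M1 {n p : ℕ} (hp : 1 ≤ p) (hpn : p ≤ n) :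
    ((M1 n).submatrix (delIdx n 0) (delIdx n (p - 1))).det =
      (-1 : Polynomial (MvPolynomial (Fin n) ℝ)) ^ (p - 1) *
        Polynomial.C (∏ i ∈ Finset.univ.filter (fun i : Fin n => i.1 < p - 1), X i) *
        ∏ j ∈ Finset.univ.filter (fun j : Fin n => p ≤ j.1),
          (Polynomial.X + Polynomial.C (X j)) := by
  rw [M1_eq_cycleMatrix, det_submatrix_cycleMatrix (c := p - 1) _ _ _ _ (by omega) (by omega)
    (fun k => by simp [delIdx_val]) (delIdx_val n (p - 1)), map_prod]
  congr 1
  exact Finset.prod_congr (Finset.filter_congr fun j _ => by omega) fun _ _ => rfl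

/-- Determinant and `(1,p)`-minor of the characteristic-style matrix of the cycle model:
`det M = ∏ (X + xᵢ) - ∏ xᵢ = Xⁿ + ∑_{m=1}^{n-1} eₘ X^{n-m}`, and the determinant of the
submatrix obtained by deleting row `1` and column `p` (1-based) equals
`(-1)^{p-1} (x₁⋯x_{p-1}) ∏_{j=p+1}^n (X + xⱼ)`. -/
theorem stmt1 (n p : ℕ) (hn : 3 ≤ n) (hp : 2 ≤ p) (hpn : p ≤ n) :
    (M1 n).det =
        ∏ i : Fin n, (Polynomial.X + Polynomial.C (X i)) -
          Polynomial.C (∏ i : Fin n, X i) ∧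
    (M1 n).det =
        Polynomial.X ^ n + ∑ m ∈ Finset.Icc 1 (n - 1),
          Polynomial.C (esymOn Finset.univ m (X : Fin n → MvPolynomial (Fin n) ℝ)) *
            Polynomial.X ^ (n - m) ∧
    ((M1 n).submatrix (delIdx n 0) (delIdx n (p - 1))).det =
      (-1 : Polynomial (MvPolynomial (Fin n) ℝ)) ^ (p - 1) *
        Polynomial.C (∏ i ∈ Finset.univ.filter (fun i : Fin n => i.1 < p - 1), X i) *
        ∏ j ∈ Finset.univ.filter (fun j : Fin n => p ≤ j.1),
          (Polynomial.X + Polynomial.C (X j)) := by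
  refine ⟨det_M1 (by omega), ?_, det_submatrix_M1 (by omega) hpn⟩
  have hne : (univ : Finset (Fin n)).Nonempty := univ_nonempty_iff.2 ⟨⟨0, by omega⟩⟩
  rw [det_M1 (by omega), prod_X_add_C_sub_C_prod_eq_sum_esymOn hne, card_univ, Fintype.card_fin]
end

section
/- Let n ≥ 2 and 1 ≤ m ≤ n−1. Then the n polynomials e_1, e_2, …, e_{n−1}, x_1 x_2 ⋯ x_m in ℝ[x_1, …, x_n] are algebraically independent over ℝ, where e_j denotes the j-th elementary symmetric polynomial in x_1, …, x_n. -/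
/-!
Since `e₁, …, eₙ` are algebraically independent, `eₙ` is transcendental over
`E = R[e₁, …, e_{n-1}]`. Suppose `p = ∏_{j ∈ s} x_j` were algebraic over `E`. Every permutation
of the variables fixes `E`, so each cyclic shift `∏_{j ∈ s} x_{j+k}` of `p` is algebraic over `E`
as well, and hence so is their product, which is `(x₁ ⋯ xₙ) ^ #s = eₙ ^ #s`; this contradicts the
transcendence of `eₙ`.
-/

open Finset MvPolynomial

theorem IsAlgebraic.map_of_forall_mem_eq {R A : Type*} [CommRing R] [CommRing A] [Algebra R A]
    {E : Subalgebra R A} (f : A →+* A) (hf : ∀ a ∈ E, f a = a) {x : A}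
    (hx : IsAlgebraic E x) : IsAlgebraic E (f x) := by
  obtain ⟨P, hP, hPx⟩ := hx
  refine ⟨P, hP, ?_⟩
  have hfE : f.comp (algebraMap E A) = algebraMap E A := RingHom.ext fun a => hf a a.2
  rw [Polynomial.aeval_def, ← hfE, ← Polynomial.hom_eval₂, ← Polynomial.aeval_def, hPx, map_zero]

namespace MvPolynomial

variable (R : Type*) [CommRing R]

theorem esymm_card_fin (n : ℕ) : esymm (Fin n) R n = ∏ i, X i := by
  have : powersetCard n (univ : Finset (Fin n)) = {univ} := by
    simpa using powersetCard_self (univ : Finset (Fin n))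
  simp [esymm, this]

theorem prod_rename_addLeft_prod_X {N : ℕ} (s : Finset (Fin (N + 1))) :
    ∏ k : Fin (N + 1), rename (Equiv.addLeft k) (∏ j ∈ s, (X j : MvPolynomial (Fin (N + 1)) R))
      = (∏ i, X i) ^ s.card := by
  simp only [map_prod, rename_X, Equiv.coe_addLeft]
  rw [Finset.prod_comm, ← Finset.prod_const]
  exact Finset.prod_congr rfl fun j _ => Equiv.prod_comp (Equiv.addRight j) X

theorem algebraicIndependent_esymm_fin (n : ℕ) :
    AlgebraicIndependent R (fun i : Fin n => esymm (Fin n) R (i + 1)) := by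
  rw [algebraicIndependent_iff_injective_aeval]
  intro p q hpq
  refine esymmAlgHom_fin_injective R le_rfl (Subtype.val_injective ?_)
  rwa [esymmAlgHom_apply, esymmAlgHom_apply]

theorem algebraicIndependent_esymm_castSucc (N : ℕ) :
    AlgebraicIndependent R (fun i : Fin N => esymm (Fin (N + 1)) R (i + 1)) :=
  (algebraicIndependent_esymm_fin R (N + 1)).comp Fin.castSucc (Fin.castSucc_injective N)

theorem transcendental_esymm_card_fin (N : ℕ) :
    Transcendental (Algebra.adjoin R (Set.range fun i : Fin N => esymm (Fin (N + 1)) R (i + 1)))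
      (esymm (Fin (N + 1)) R (N + 1)) := by
  rw [← (algebraicIndependent_esymm_castSucc R N).option_iff_transcendental]
  convert (algebraicIndependent_esymm_fin R (N + 1)).comp _ finSuccEquivLast.symm.injective
    using 2 with o
  cases o <;> simp

theorem algebraicIndependent_esymm_option_prod_X [IsDomain R] {N : ℕ} {s : Finset (Fin (N + 1))}
    (hs : s.Nonempty) :
    AlgebraicIndependent R (fun o : Option (Fin N) =>
      o.elim (∏ j ∈ s, X j) (fun i => esymm (Fin (N + 1)) R (i + 1))) := by
  rw [(algebraicIndependent_esymm_castSucc R N).option_iff_transcendental]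
  intro hp
  refine (transcendental_esymm_card_fin R N).pow hs.card_pos ?_
  have hsymm : ∀ a ∈ Algebra.adjoin R (Set.range fun i : Fin N => esymm (Fin (N + 1)) R (i + 1)),
      IsSymmetric a := by
    refine fun a ha => (Algebra.adjoin_le ?_ ha : a ∈ symmetricSubalgebra (Fin (N + 1)) R)
    rintro _ ⟨i, rfl⟩
    exact esymm_isSymmetric _ _ _
  rw [esymm_card_fin, ← prod_rename_addLeft_prod_X]
  exact Subalgebra.prod_mem (Subalgebra.algebraicClosure _ _) fun k _ =>
    (Subalgebra.mem_algebraicClosure _ _).mpr <|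
      hp.map_of_forall_mem_eq (rename (Equiv.addLeft k)).toRingHom fun a ha => hsymm a ha _

end MvPolynomial

theorem stmt3_general (n m : ℕ) (hn : 2 ≤ n) (hm1 : 1 ≤ m) :
    AlgebraicIndependent ℝ (fun i : Fin n =>
      if i.1 < n - 1 then
        esymOn Finset.univ (i.1 + 1) (X : Fin n → MvPolynomial (Fin n) ℝ)
      else
        ∏ j ∈ Finset.univ.filter (fun j : Fin n => j.1 < m), X j) := by
  obtain ⟨N, rfl⟩ : ∃ N, n = N + 1 := ⟨n - 1, by omega⟩
  have hs : (univ.filter fun j : Fin (N + 1) => j.1 < m).Nonempty :=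
    ⟨0, mem_filter.mpr ⟨mem_univ _, hm1⟩⟩
  convert (algebraicIndependent_esymm_option_prod_X ℝ hs).comp _ finSuccEquivLast.injective
    using 2 with i
  induction i using Fin.lastCases with
  | last => simp
  | cast i => simp [esymOn, esymm]

/-- For `n ≥ 2` and `1 ≤ m ≤ n - 1`, the `n` polynomials
`e₁, e₂, …, e_{n-1}, x₁ x₂ ⋯ xₘ` in `ℝ[x₁, …, xₙ]` are algebraically independent over `ℝ`,
where `eⱼ` is the `j`-th elementary symmetric polynomial in `x₁, …, xₙ`.
(0-based: the family is indexed by `Fin n`, with index `i < n - 1` giving `e_{i+1}` and the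
last index giving the product `x₁ ⋯ xₘ`.) -/
theorem stmt3 (n m : ℕ) (hn : 2 ≤ n) (hm1 : 1 ≤ m) (hm2 : m ≤ n - 1) :
    AlgebraicIndependent ℝ (fun i : Fin n =>
      if i.1 < n - 1 then
        esymOn Finset.univ (i.1 + 1) (X : Fin n → MvPolynomial (Fin n) ℝ)
      else
        ∏ j ∈ Finset.univ.filter (fun j : Fin n => j.1 < m), X j) :=
  stmt3_general n m hn hm1
end

section
/- Let n ≥ 3, 1 ≤ p ≤ n, and let L ⊆ {1, …, n} be nonempty. Work in the polynomial ring R = ℝ[x_1, …, x_n, (y_ℓ)_{ℓ∈L}], and set z_ℓ = x_ℓ + y_ℓ for ℓ ∈ L and z_ℓ = x_ℓ for ℓ ∉ L. Let M be the n×n matrix over R[X] with M_{ℓ,ℓ} = X + z_ℓ for 1 ≤ ℓ ≤ n, M_{ℓ+1,ℓ} = −x_ℓ for 1 ≤ ℓ ≤ n−1, M_{1,n} = −x_n, and all other entries 0. Then: (i) det(M) = ∏_{ℓ=1}^n (X + z_ℓ) − ∏_{ℓ=1}^n x_ℓ; and (ii) if p ≥ 2, the determinant of the submatrix of M obtained by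 deleting row 1 and column p equals (−1)^{p−1} (x_1 x_2 ⋯ x_{p−1}) · ∏_{j=p+1}^n (X + z_j). -/
open Finset MvPolynomial

/-- In `ℝ[x₁, …, xₙ, (y_ℓ)_{ℓ ∈ L}]`: the quantity `z_ℓ = x_ℓ + y_ℓ` if `ℓ ∈ L`, and
`z_ℓ = x_ℓ` otherwise.  (`Sum.inl ℓ` is the variable `x_{ℓ+1}`, and `Sum.inr ⟨ℓ, _⟩` is the
leak variable `y_{ℓ+1}`, 0-based.) -/
noncomputable def z5 (n : ℕ) (L : Finset (Fin n)) (ℓ : Fin n) :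
    MvPolynomial (Fin n ⊕ {i : Fin n // i ∈ L}) ℝ :=
  X (Sum.inl ℓ) + if h : ℓ ∈ L then X (Sum.inr ⟨ℓ, h⟩) else 0

/-- The matrix `X•I - A` of the `n`-compartment cycle model with leak set `L`, over
`(ℝ[x, y])[X]`: diagonal entries `X + z_ℓ`, subdiagonal entries `-x_ℓ`, top-right corner
`-xₙ`, all other entries `0`. -/
noncomputable def M5 (n : ℕ) (L : Finset (Fin n)) :
    Matrix (Fin n) (Fin n) (Polynomial (MvPolynomial (Fin n ⊕ {i : Fin n // i ∈ L}) ℝ)) :=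
  Matrix.of fun i j =>
    if i = j then Polynomial.X + Polynomial.C (z5 n L j)
    else if i.1 = j.1 + 1 ∨ (i.1 = 0 ∧ j.1 = n - 1) then -Polynomial.C (X (Sum.inl j) : MvPolynomial (Fin n ⊕ {i : Fin n // i ∈ L}) ℝ)
    else 0

/-!
Expanding `det M` along its first row leaves two minors, those obtained by deleting row 1 and
column 1 or column `n`, and both are instances of (ii). In (ii), the minor obtained by deleting
row 1 and column `p` is block diagonal: an upper triangular block with diagonal
`-x₁, …, -x_{p-1}` and a lower triangular block with diagonal `X + z_{p+1}, …, X + z_n`.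
-/

namespace Matrix

theorem det_of_blockTriangular_of_injective_s5 {m α R : Type*} [Fintype m] [DecidableEq m]
    [CommRing R] [LinearOrder α] {M : Matrix m m R} {b : m → α}
    (hb : Function.Injective b) (hM : M.BlockTriangular b) : M.det = ∏ i, M i i :=
  letI : LinearOrder m := LinearOrder.lift' b hb
  det_of_isUpperTriangular hM

def cycleMatrix {R : Type*} [Ring R] {n : ℕ} (d c : Fin n → R) : Matrix (Fin n) (Fin n) R :=
  of fun i j =>
    if i = j then d j else if i.1 = j.1 + 1 ∨ (i.1 = 0 ∧ j.1 = n - 1) then -c j else 0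

section
variable {R : Type*} [CommRing R] {m : ℕ}

theorem cycleMatrix_succ_apply {d c : Fin (m + 1) → R} (i : Fin m) (j : Fin (m + 1)) :
    cycleMatrix d c i.succ j = if j = i.succ then d j else if j = i.castSucc then -c j else 0 := by
  simp only [cycleMatrix, of_apply, Fin.ext_iff, Fin.val_succ, Fin.val_castSucc]
  grind

theorem cycleMatrix_zero_apply {d c : Fin (m + 2) → R} (j : Fin (m + 2)) :
    cycleMatrix d c 0 j = if j = 0 then d j else if j = Fin.last _ then -c j else 0 := by
  simp only [cycleMatrix, of_apply, Fin.ext_iff, Fin.val_zero, Fin.val_last]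
  grind

theorem det_cycleMatrix_submatrix_succ_succAbove_eq_prod (d c : Fin (m + 1) → R)
    (q : Fin (m + 1)) :
    ((cycleMatrix d c).submatrix Fin.succ q.succAbove).det =
      ∏ k : Fin m, if k.castSucc < q then -c k.castSucc else d k.succ := by
  have hval (k : Fin m) : (q.succAbove k : ℕ) = if k.castSucc < q then (k : ℕ) else k + 1 := by
    simp only [Fin.succAbove]; split_ifs <;> rfl
  -- The minor is block diagonal: upper triangular on the indices `k < q` and lower triangular
  -- on the others, so `b` increases on the first block and decreases on the second.
  let b (k : Fin m) : ℤ := if k.castSucc < q then k else -k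
  have hb : Function.Injective b := by
    intro k l hkl
    simp only [b, Fin.lt_def, Fin.val_castSucc] at hkl
    ext; split_ifs at hkl <;> omega
  have hB : ((cycleMatrix d c).submatrix Fin.succ q.succAbove).BlockTriangular b := by
    intro i j hji
    simp only [b, Fin.lt_def, Fin.val_castSucc] at hji
    rw [submatrix_apply, cycleMatrix_succ_apply, if_neg, if_neg] <;>
      simp only [Fin.ext_iff, hval, Fin.lt_def, Fin.val_castSucc, Fin.val_succ] <;>
      split_ifs at hji ⊢ <;> omega
  rw [det_of_blockTriangular_of_injective_s5 hb hB]
  refine Finset.prod_congr rfl fun k _ => ?_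
  rw [submatrix_apply, cycleMatrix_succ_apply]
  by_cases hk : k.castSucc < q
  · simp [hk, Fin.succAbove_of_castSucc_lt, Fin.ext_iff]
  · simp [hk, Fin.succAbove_of_le_castSucc _ _ (not_lt.mp hk)]

theorem det_cycleMatrix (d c : Fin (m + 2) → R) :
    (cycleMatrix d c).det = ∏ i, d i - ∏ i, c i := by
  rw [det_succ_row_zero, Fintype.sum_eq_add 0 (Fin.last _) Fin.last_pos.ne fun j hj => by
    rw [cycleMatrix_zero_apply, if_neg hj.1, if_neg hj.2, mul_zero, zero_mul]]
  simp only [det_cycleMatrix_submatrix_succ_succAbove_eq_prod, cycleMatrix_zero_apply, if_pos,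
    Fin.not_lt_zero, Fin.castSucc_lt_last, if_false, Fin.val_zero, Fin.val_last,
    Fin.last_pos.ne', prod_neg, card_univ, Fintype.card_fin]
  rw [Fin.prod_univ_succ d, Fin.prod_univ_castSucc c]
  have hsign : (-1 : R) ^ (m + 1) * (-1) ^ (m + 1) = 1 := by rw [← mul_pow]; norm_num
  linear_combination (-(∏ i : Fin (m + 1), c i.castSucc) * c (Fin.last _)) * hsign

theorem det_cycleMatrix_submatrix_succ_succAbove (d c : Fin (m + 1) → R) (q : Fin (m + 1)) :
    ((cycleMatrix d c).submatrix Fin.succ q.succAbove).det =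
      (-1) ^ (q : ℕ) * (∏ i ∈ Iio q, c i) * ∏ j ∈ Ioi q, d j := by
  have hsplit (k : Fin m) : (if k.castSucc < q then -c k.castSucc else d k.succ) =
      (if k.castSucc < q then -c k.castSucc else 1) * (if q < k.succ then d k.succ else 1) := by
    have := (Fin.castSucc_lt_iff_succ_le (i := k) (j := q)).trans not_lt.symm
    split_ifs <;> simp_all
  rw [det_cycleMatrix_submatrix_succ_succAbove_eq_prod, Finset.prod_congr rfl fun k _ => hsplit k,
    prod_mul_distrib, ← Fin.card_Iio q, ← prod_neg, ← filter_gt_eq_Iio, ← filter_lt_eq_Ioi,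
    prod_filter, prod_filter, Fin.prod_univ_castSucc (fun i => if i < q then -c i else 1),
    Fin.prod_univ_succ (fun j => if q < j then d j else 1)]
  simp [(Fin.le_last q).not_gt]

end

end Matrix

theorem delIdx_eq_succAbove {m r : ℕ} (hr : r < m + 1) :
    delIdx (m + 1) r = (⟨r, hr⟩ : Fin (m + 1)).succAbove := by
  ext k
  simp only [delIdx, Fin.succAbove, Fin.lt_def, Fin.val_castSucc]
  split_ifs <;> rfl

theorem M5_eq_cycleMatrix (n : ℕ) (L : Finset (Fin n)) :
    M5 n L = Matrix.cycleMatrix (fun j => Polynomial.X + Polynomial.C (z5 n L j))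
      fun j => Polynomial.C (X (Sum.inl j) : MvPolynomial (Fin n ⊕ {i : Fin n // i ∈ L}) ℝ) :=
  rfl

theorem stmt5_general (n p : ℕ) (hn : 3 ≤ n) (hpn : p ≤ n)
    (L : Finset (Fin n)) :
    (M5 n L).det =
        ∏ i : Fin n, (Polynomial.X + Polynomial.C (z5 n L i)) -
          Polynomial.C (∏ i : Fin n, X (Sum.inl i)) ∧
    (2 ≤ p →
      ((M5 n L).submatrix (delIdx n 0) (delIdx n (p - 1))).det =
        (-1) ^ (p - 1) *
          Polynomial.C (∏ i ∈ Finset.univ.filter (fun i : Fin n => i.1 < p - 1),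
            (X (Sum.inl i) : MvPolynomial (Fin n ⊕ {i : Fin n // i ∈ L}) ℝ)) *
          ∏ j ∈ Finset.univ.filter (fun j : Fin n => p ≤ j.1),
            (Polynomial.X + Polynomial.C (z5 n L j))) := by
  obtain ⟨m, rfl⟩ : ∃ m, n = m + 2 := ⟨n - 2, by omega⟩
  rw [M5_eq_cycleMatrix]
  refine ⟨by rw [Matrix.det_cycleMatrix, map_prod], fun hp => ?_⟩
  set q : Fin (m + 2) := ⟨p - 1, by omega⟩
  have hIio : Iio q = univ.filter (fun i : Fin (m + 2) => i.1 < p - 1) := by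
    ext i; simp [q, Fin.lt_def]
  have hIoi : Ioi q = univ.filter (fun j : Fin (m + 2) => p ≤ j.1) := by
    ext j; simp only [mem_Ioi, Fin.lt_def, mem_filter, mem_univ, true_and, q]; omega
  rw [delIdx_eq_succAbove (r := 0) (by omega), Fin.mk_zero, Fin.succAbove_zero,
    delIdx_eq_succAbove (by omega : p - 1 < m + 2),
    Matrix.det_cycleMatrix_submatrix_succ_succAbove, map_prod, hIio, hIoi]

/-- For the cycle model with nonempty leak set `L`:
(i) `det M = ∏_ℓ (X + z_ℓ) - ∏_ℓ x_ℓ`, and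
(ii) if `p ≥ 2`, the determinant of the submatrix of `M` obtained by deleting row `1` and
column `p` (1-based) equals `(-1)^{p-1} (x₁⋯x_{p-1}) ∏_{j=p+1}^n (X + z_j)`. -/
theorem stmt5 (n p : ℕ) (hn : 3 ≤ n) (hp1 : 1 ≤ p) (hpn : p ≤ n)
    (L : Finset (Fin n)) (hL : L.Nonempty) :
    (M5 n L).det =
        ∏ i : Fin n, (Polynomial.X + Polynomial.C (z5 n L i)) -
          Polynomial.C (∏ i : Fin n, X (Sum.inl i)) ∧
    (2 ≤ p →
      ((M5 n L).submatrix (delIdx n 0) (delIdx n (p - 1))).det =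
        (-1) ^ (p - 1) *
          Polynomial.C (∏ i ∈ Finset.univ.filter (fun i : Fin n => i.1 < p - 1),
            (X (Sum.inl i) : MvPolynomial (Fin n ⊕ {i : Fin n // i ∈ L}) ℝ)) *
          ∏ j ∈ Finset.univ.filter (fun j : Fin n => p ≤ j.1),
            (Polynomial.X + Polynomial.C (z5 n L j))) :=
  stmt5_general n p hn hpn L
end

section
/- Let n ≥ 2 and let L ⊆ {1, …, n} with |L| ≤ 1. Consider the catenary model's matrix: work in the polynomial ring R over ℝ in the 2(n−1)+|L| variables a_1, …, a_{n−1} (with a_i standing for the rate constant k_{i+1,i}), b_1, …, b_{n−1} (with b_i standing for k_{i,i+1}), and y (the leak rate k_{0q}, present only if L = {q}). Let A be the n×n tridiagonal matrix over R with A_{i+1,i} = a_i and A_{i,i+1} = b_i for 1 ≤ i ≤ n−1, diagonal entries A_{i,i} = −(a_i if i ≤ n−1) − (b_{i−1} if i ≥ 2) − (y if i ∈ L), and all other entries 0. Consider the 2n−1 polynomials consisting of the coefficients of X^m for m = 0, …, n−1 in det(X·I − A) ∈ R[X], together with the coefficients of X^m for m = 0, …, n−2 in the determinant of the submatrix of X·I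 − A obtained by deleting row 1 and column 1. Then the Jacobian matrix of this family with respect to all 2(n−1)+|L| variables, viewed over the fraction field of R, has rank 2(n−1)+|L|. -/
/-!
A vector `l` in the kernel of the Jacobian is the same as a derivation `d = ∑ᵥ l_v ∂_v` into the
fraction field that kills the given coefficients, hence (by monicity) all coefficients of
`P₀ = det (X - A)` and of `P₁`, the determinant with the first row and column deleted. Expanding
along the first row, the characteristic polynomials `Pₖ` of the trailing blocks of the tridiagonal
matrix `A` satisfy the continuant recurrence `Pₖ = (X + oₖ) Pₖ₊₁ - aₖ bₖ Pₖ₊₂`, where `oₖ = -Aₖₖ`.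
Since `Pₖ₊₁` and `Pₖ₊₂` are monic of consecutive degrees, applying `d` and reading off the two top
coefficients shows inductively that `d` kills every `oₖ`, every `aₖ bₖ` and every `Pₖ`. The
resulting linear equations `d aₖ + d bₖ₋₁ + [k = q] d y = 0` and `aₖ d bₖ + bₖ d aₖ = 0` force
`d aₖ = d bₖ = 0`, propagating from both ends of the path towards the leak compartment `q`, and
then `d y = 0`.
-/

open Finset MvPolynomial

/-- The compartmental matrix of the `n`-compartment catenary model with leak set `L`.
Variables: `Sum.inl (Sum.inl i)` is `a_{i+1}` (the rate `k_{i+2,i+1}`), `Sum.inl (Sum.inr i)`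
is `b_{i+1}` (the rate `k_{i+1,i+2}`), and `Sum.inr ⟨q, _⟩` is the leak rate `y` in
compartment `q` (only present for `q ∈ L`).  Entries (1-based): `A_{i+1,i} = aᵢ`,
`A_{i,i+1} = bᵢ`, `A_{i,i} = -(aᵢ if i ≤ n-1) - (b_{i-1} if i ≥ 2) - (y if i ∈ L)`,
all other entries `0`. -/
noncomputable def A7 (n : ℕ) (L : Finset (Fin n)) :
    Matrix (Fin n) (Fin n)
      (MvPolynomial ((Fin (n - 1) ⊕ Fin (n - 1)) ⊕ {i : Fin n // i ∈ L}) ℝ) :=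
  Matrix.of fun i j =>
    if i = j then
      -(if h : i.1 < n - 1 then X (Sum.inl (Sum.inl ⟨i.1, h⟩)) else 0)
        - (if h1 : 1 ≤ i.1 then X (Sum.inl (Sum.inr ⟨i.1 - 1, by have := i.isLt; omega⟩)) else 0)
        - (if h : i ∈ L then X (Sum.inr ⟨i, h⟩) else 0)
    else if h : i.1 = j.1 + 1 then X (Sum.inl (Sum.inl ⟨j.1, by have := i.isLt; omega⟩))
    else if h : j.1 = i.1 + 1 then X (Sum.inl (Sum.inr ⟨i.1, by have := j.isLt; omega⟩))
    else 0

/-- The `2n - 1` non-monic coefficients of the input-output equation of the catenary model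
with input and output in compartment `1`: the coefficients of `X^m`, `m = 0, …, n-1`, in
`det (X•I - A)`, together with the coefficients of `X^m`, `m = 0, …, n-2`, in the determinant
of the submatrix of `X•I - A` obtained by deleting row `1` and column `1`. -/
noncomputable def coeffs7 (n : ℕ) (L : Finset (Fin n)) (m : Fin (2 * n - 1)) :
    MvPolynomial ((Fin (n - 1) ⊕ Fin (n - 1)) ⊕ {i : Fin n // i ∈ L}) ℝ :=
  if m.1 < n then (Matrix.charmatrix (A7 n L)).det.coeff m.1
  else ((Matrix.charmatrix (A7 n L)).submatrix (delIdx n 0) (delIdx n 0)).det.coeff (m.1 - n)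

section Chain

variable {K : Type*} [CommRing K] [NoZeroDivisors K]

/-- `α, β, ℓ` stand for the images of the rates `aₖ, bₖ` and of the leak under a derivation:
`hxy` comes from the products `aₖ bₖ`, and `h0`, `hstep`, `hN` from the diagonal entries.
Away from the leak position `q`, zeros propagate forward from `0` and backward from `N`. -/
theorem chain_eq_zero {N q : ℕ} {α β ℓ x y : ℕ → K}
    (hx : ∀ k < N, x k ≠ 0) (hy : ∀ k < N, y k ≠ 0)
    (hxy : ∀ k < N, x k * β k + y k * α k = 0) (hℓ : ∀ i ≠ q, ℓ i = 0)
    (h0 : α 0 + ℓ 0 = 0) (hstep : ∀ k < N, α (k + 1) + β k + ℓ (k + 1) = 0)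
    (hN : α N = 0) :
    (∀ k < N, α k = 0 ∧ β k = 0) ∧ ∀ i ≤ N, ℓ i = 0 := by
  have link : ∀ k < N, α k = 0 ↔ β k = 0 := fun k hk => by
    constructor <;> rintro h <;> simpa [h, hx k hk, hy k hk] using hxy k hk
  have below : ∀ k < N, k < q → α k = 0 := by
    intro k
    induction k with
    | zero => intro _ hq; simpa [hℓ 0 (by omega)] using h0
    | succ k ih =>
      intro hk hq
      have h := hstep k (by omega)
      rwa [(link k (by omega)).1 (ih (by omega) (by omega)), hℓ (k + 1) (by omega), add_zero,
        add_zero] at h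
  have above : ∀ k ≤ N, q ≤ k → α k = 0 := by
    intro k hk
    induction hk using Nat.decreasingInduction with
    | self => exact fun _ => hN
    | of_succ k hk ih =>
      intro hq
      have h := hstep k hk
      rw [ih (by omega), hℓ (k + 1) (by omega), zero_add, add_zero] at h
      exact (link k hk).2 h
  have hα : ∀ k ≤ N, α k = 0 := fun k hk => by
    rcases hk.lt_or_eq with hk | rfl
    · exact if hq : k < q then below k hk hq else above k hk.le (by omega)
    · exact hN
  refine ⟨fun k hk => ⟨hα k hk.le, (link k hk).1 (hα k hk.le)⟩, fun i hi => ?_⟩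
  rcases i with _ | k
  · simpa [hα 0 hi] using h0
  · simpa [hα (k + 1) hi, (link k hi).1 (hα k (by omega))] using hstep k hi

end Chain

section Derivation

open Polynomial

variable {S A M : Type*} [CommSemiring S] [CommRing A] [Algebra S A]

theorem Derivation.apply_coeff_eq_zero_of_monic [AddCommGroup M] [Module A M] [Module S M]
    (d : Derivation S A M) {P : A[X]} (hP : P.Monic)
    (h : ∀ j < P.natDegree, d (P.coeff j) = 0) (j : ℕ) : d (P.coeff j) = 0 := by
  rcases lt_trichotomy j P.natDegree with hj | rfl | hj
  · exact h j hj
  · rw [hP.coeff_natDegree, d.map_one_eq_zero]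
  · rw [coeff_eq_zero_of_natDegree_lt hj, map_zero]

/-- Differentiate the recurrence and compare the coefficients of degree `deg Q`, then `deg T`. -/
theorem Derivation.apply_eq_zero_of_recurrence {K : Type*} [CommRing K] [NoZeroDivisors K]
    [Algebra A K] [Module S K] (d : Derivation S A K) {P Q T : A[X]} {c e : A}
    (hrec : P = (Polynomial.X + Polynomial.C c) * Q - Polynomial.C e * T)
    (hQ : Q.Monic) (hT : T.Monic) (hdeg : Q.natDegree = T.natDegree + 1) (he : algebraMap A K e ≠ 0)
    (hP : ∀ j, d (P.coeff j) = 0) (hQd : ∀ j, d (Q.coeff j) = 0) :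
    d c = 0 ∧ d e = 0 ∧ ∀ j, d (T.coeff j) = 0 := by
  have hXQ : ∀ j, d ((Polynomial.X * Q).coeff j) = 0 := by
    rintro (_ | j)
    · rw [coeff_X_mul_zero, map_zero]
    · rw [Polynomial.coeff_X_mul, hQd]
  have key : ∀ j, algebraMap A K (Q.coeff j) * d c
      = algebraMap A K e * d (T.coeff j) + algebraMap A K (T.coeff j) * d e := by
    intro j
    have h := hP j
    rw [hrec, add_mul, Polynomial.coeff_sub, Polynomial.coeff_add, Polynomial.coeff_C_mul,
      Polynomial.coeff_C_mul, map_sub, map_add, hXQ, d.leibniz, d.leibniz, hQd, smul_zero,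
      zero_add, zero_add] at h
    simp only [Algebra.smul_def] at h
    linear_combination h
  have hc : d c = 0 := by
    have h := key Q.natDegree
    rwa [hQ.coeff_natDegree, coeff_eq_zero_of_natDegree_lt (by omega), map_zero, map_one, one_mul,
      map_zero, mul_zero, zero_mul, add_zero] at h
  have he' : d e = 0 := by
    simpa [hc, hT.coeff_natDegree, eq_comm] using key T.natDegree
  exact ⟨hc, he', fun j => by simpa [hc, he', he] using key j⟩

end Derivation

theorem MvPolynomial.mkDerivation_apply_eq_sum_pderiv {σ R A : Type*} [CommSemiring R]
    [Fintype σ] [AddCommMonoid A] [Module R A] [Module (MvPolynomial σ R) A]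
    [IsScalarTower R (MvPolynomial σ R) A] (l : σ → A) (f : MvPolynomial σ R) :
    mkDerivation R l f = ∑ i, pderiv i f • l i := by
  classical
  have sum_apply (D : σ → Derivation R (MvPolynomial σ R) A) (g : MvPolynomial σ R) :
      (∑ i, D i) g = ∑ i, D i g := by
    rw [← Derivation.coeFnAddMonoidHom_apply, map_sum, Finset.sum_apply]; rfl
  have h : mkDerivation R l
      = ∑ i, (LinearMap.toSpanSingleton (MvPolynomial σ R) A (l i)).compDer (pderiv i) :=
    derivation_ext fun j => by simp [sum_apply, pderiv_X, Pi.single_apply]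
  simp [h, sum_apply]

namespace Matrix

variable {R : Type*} [CommRing R]

theorem det_eq_of_first_row_col_eq_zero {m : ℕ} (M : Matrix (Fin (m + 2)) (Fin (m + 2)) R)
    (hrow : ∀ j : Fin (m + 2), 1 < (j : ℕ) → M 0 j = 0)
    (hcol : ∀ i : Fin (m + 2), 1 < (i : ℕ) → M i 0 = 0) :
    M.det = M 0 0 * (M.submatrix Fin.succ Fin.succ).det
      - M 0 1 * M 1 0 * (M.submatrix (Fin.succ ∘ Fin.succ) (Fin.succ ∘ Fin.succ)).det := by
  have hminor : (M.submatrix Fin.succ (Fin.succAbove 1)).det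
      = M 1 0 * (M.submatrix (Fin.succ ∘ Fin.succ) (Fin.succ ∘ Fin.succ)).det := by
    rw [det_succ_column_zero, Fin.sum_univ_succ]
    have hcol' : ∀ i : Fin m, M i.succ.succ 0 = 0 := fun i => hcol _ (by simp)
    have hcomp : (Fin.succAbove (1 : Fin (m + 2)) ∘ Fin.succ) = Fin.succ ∘ Fin.succ := by
      funext j
      exact Fin.succAbove_of_le_castSucc _ _ (by simp [Fin.le_def])
    simp [hcol', submatrix_submatrix, hcomp]
  rw [det_succ_row_zero, Fin.sum_univ_succ, Fin.sum_univ_succ]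
  have hrow' : ∀ j : Fin m, M 0 j.succ.succ = 0 := fun j => hrow _ (by simp)
  simp [hrow', hminor]
  ring

variable {α : Type*} {n : ℕ}

def trailing (M : Matrix (Fin n) (Fin n) α) (k s : ℕ) (h : k + s = n) :
    Matrix (Fin s) (Fin s) α :=
  M.submatrix (Fin.cast h ∘ Fin.natAdd k) (Fin.cast h ∘ Fin.natAdd k)

@[simp]
theorem trailing_apply (M : Matrix (Fin n) (Fin n) α) (k s : ℕ) (h : k + s = n) (i j : Fin s) :
    M.trailing k s h i j = M ⟨k + i, by omega⟩ ⟨k + j, by omega⟩ :=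
  rfl

def IsTridiagonal [Zero α] (M : Matrix (Fin n) (Fin n) α) : Prop :=
  ∀ i j : Fin n, (i : ℕ) + 1 < j ∨ (j : ℕ) + 1 < i → M i j = 0

theorem IsTridiagonal.det_trailing {M : Matrix (Fin n) (Fin n) R} (hM : M.IsTridiagonal)
    {k s : ℕ} (h : k + (s + 2) = n) :
    (M.trailing k (s + 2) h).det
      = M ⟨k, by omega⟩ ⟨k, by omega⟩ * (M.trailing (k + 1) (s + 1) (by omega)).det
        - M ⟨k, by omega⟩ ⟨k + 1, by omega⟩ * M ⟨k + 1, by omega⟩ ⟨k, by omega⟩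
          * (M.trailing (k + 2) s (by omega)).det := by
  rw [det_eq_of_first_row_col_eq_zero _ (fun j hj => hM _ _ (by simp; omega))
    (fun i hi => hM _ _ (by simp; omega))]
  congr 3 <;> ext <;> simp only [submatrix_apply, trailing_apply, Function.comp_apply,
    Fin.val_succ] <;> congr 2 <;> omega

theorem IsTridiagonal.charmatrix {M : Matrix (Fin n) (Fin n) R} (hM : M.IsTridiagonal) :
    M.charmatrix.IsTridiagonal := fun i j hij => by
  rw [charmatrix_apply_ne _ _ _ (by rintro rfl; omega), hM i j hij, map_zero, neg_zero]

theorem rank_of_mulVec_injective {m p : Type*} [Fintype p] [StrongRankCondition R]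
    {A : Matrix m p R} (hA : Function.Injective A.mulVec) : A.rank = Fintype.card p := by
  rw [rank, LinearMap.finrank_range_of_inj hA, Module.finrank_fintype_fun_eq_card]

theorem charmatrix_submatrix {m p : Type*} [Fintype m] [Fintype p] [DecidableEq m] [DecidableEq p]
    (M : Matrix p p R) {e : m → p} (he : Function.Injective e) :
    (M.submatrix e e).charmatrix = M.charmatrix.submatrix e e := by
  ext i j : 1
  rcases eq_or_ne i j with rfl | hij
  · simp [charmatrix_apply_eq]
  · rw [submatrix_apply, charmatrix_apply_ne _ _ _ hij, charmatrix_apply_ne _ _ _ (he.ne hij),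
      submatrix_apply]

theorem trailing_charmatrix (M : Matrix (Fin n) (Fin n) R) (k s : ℕ) (h : k + s = n) :
    M.charmatrix.trailing k s h = (M.trailing k s h).charmatrix :=
  (charmatrix_submatrix M ((Fin.cast_injective h).comp (Fin.natAdd_injective s k))).symm

end Matrix

namespace Catenary

variable (n : ℕ) (L : Finset (Fin n))

abbrev Var := (Fin (n - 1) ⊕ Fin (n - 1)) ⊕ {i : Fin n // i ∈ L}

noncomputable def aRate (k : ℕ) : MvPolynomial (Var n L) ℝ :=
  if h : k < n - 1 then X (.inl (.inl ⟨k, h⟩)) else 0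

noncomputable def bRate (k : ℕ) : MvPolynomial (Var n L) ℝ :=
  if h : k < n - 1 then X (.inl (.inr ⟨k, h⟩)) else 0

noncomputable def leakRate (i : Fin n) : MvPolynomial (Var n L) ℝ :=
  if h : i ∈ L then X (.inr ⟨i, h⟩) else 0

noncomputable def outflow (i : Fin n) : MvPolynomial (Var n L) ℝ :=
  aRate n L i + (if (i : ℕ) = 0 then 0 else bRate n L (i - 1)) + leakRate n L i

theorem A7_apply_self (i : Fin n) : A7 n L i i = -outflow n L i := by
  have := i.isLt
  simp only [A7, Matrix.of_apply, if_true, outflow, aRate, bRate, leakRate]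
  split_ifs <;> first | omega | ring

theorem A7_succ_apply (k : ℕ) (hk : k + 1 < n) :
    A7 n L ⟨k + 1, hk⟩ ⟨k, by omega⟩ = aRate n L k := by
  simp [A7, aRate, show k < n - 1 by omega]

theorem A7_apply_succ (k : ℕ) (hk : k + 1 < n) :
    A7 n L ⟨k, by omega⟩ ⟨k + 1, hk⟩ = bRate n L k := by
  simp [A7, bRate, show k < n - 1 by omega, show k ≠ k + 2 by omega]

theorem isTridiagonal_A7 : (A7 n L).IsTridiagonal := fun i j hij => by
  simp only [A7, Matrix.of_apply]
  split_ifs <;> first | rfl | omega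

noncomputable def tailCharpoly (k s : ℕ) (h : k + s = n) :
    Polynomial (MvPolynomial (Var n L) ℝ) :=
  ((A7 n L).trailing k s h).charpoly

theorem tailCharpoly_monic (k s : ℕ) (h : k + s = n) : (tailCharpoly n L k s h).Monic :=
  Matrix.charpoly_monic _

theorem tailCharpoly_natDegree (k s : ℕ) (h : k + s = n) :
    (tailCharpoly n L k s h).natDegree = s := by
  simp [tailCharpoly, Matrix.charpoly_natDegree_eq_dim]

theorem tailCharpoly_eq_det (k s : ℕ) (h : k + s = n) :
    tailCharpoly n L k s h = ((A7 n L).charmatrix.trailing k s h).det := by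
  rw [Matrix.trailing_charmatrix]
  rfl

theorem tailCharpoly_zero (s : ℕ) (h : 0 + s = n) :
    tailCharpoly n L 0 s h = (A7 n L).charmatrix.det := by
  have : (A7 n L).trailing 0 s h
      = Matrix.reindex (finCongr (by omega)) (finCongr (by omega)) (A7 n L) := by
    ext i j : 1
    simp only [Matrix.trailing_apply, Matrix.reindex_apply, Matrix.submatrix_apply]
    congr 1 <;> ext <;> simp
  rw [tailCharpoly, this, Matrix.charpoly_reindex]
  rfl

theorem tailCharpoly_one (s : ℕ) (h : 1 + s = n) :
    tailCharpoly n L 1 s h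
      = ((A7 n L).charmatrix.submatrix (delIdx n 0) (delIdx n 0)).det := by
  have hdel : Function.Injective (delIdx n 0) := fun i j hij => by
    simpa [delIdx, Fin.ext_iff] using hij
  have : (A7 n L).trailing 1 s h = Matrix.reindex (finCongr (by omega)) (finCongr (by omega))
      ((A7 n L).submatrix (delIdx n 0) (delIdx n 0)) := by
    ext i j : 1
    simp only [Matrix.trailing_apply, Matrix.reindex_apply, Matrix.submatrix_apply]
    congr 1 <;> ext <;> simp [delIdx, add_comm]
  rw [tailCharpoly, this, Matrix.charpoly_reindex, Matrix.charpoly,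
    Matrix.charmatrix_submatrix _ hdel]

theorem tailCharpoly_last (k : ℕ) (h : k + 1 = n) :
    tailCharpoly n L k 1 h = Polynomial.X + Polynomial.C (outflow n L ⟨k, by omega⟩) := by
  simp [tailCharpoly_eq_det, Matrix.charmatrix_apply_eq, A7_apply_self]

theorem tailCharpoly_recurrence (k s : ℕ) (h : k + (s + 2) = n) :
    tailCharpoly n L k (s + 2) h
      = (Polynomial.X + Polynomial.C (outflow n L ⟨k, by omega⟩))
          * tailCharpoly n L (k + 1) (s + 1) (by omega)
        - Polynomial.C (aRate n L k * bRate n L k) * tailCharpoly n L (k + 2) s (by omega) := by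
  rw [tailCharpoly_eq_det, (isTridiagonal_A7 n L).charmatrix.det_trailing, tailCharpoly_eq_det,
    tailCharpoly_eq_det, Matrix.charmatrix_apply_eq, A7_apply_self,
    Matrix.charmatrix_apply_ne _ _ _ (by simp), Matrix.charmatrix_apply_ne _ _ _ (by simp),
    A7_succ_apply, A7_apply_succ]
  simp only [map_neg, map_mul, sub_neg_eq_add]
  ring

section Derivation

variable {n L} {K : Type*} [CommRing K] [IsDomain K] [Algebra (MvPolynomial (Var n L) ℝ) K]
  [FaithfulSMul (MvPolynomial (Var n L) ℝ) K] [Module ℝ K]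
  (d : Derivation ℝ (MvPolynomial (Var n L) ℝ) K)

theorem aRate_mul_bRate_ne_zero {k : ℕ} (hk : k < n - 1) : aRate n L k * bRate n L k ≠ 0 := by
  simp [aRate, bRate, hk, X_ne_zero]

theorem derivation_tailCharpoly_step {k s : ℕ} (h : k + (s + 2) = n)
    (h0 : ∀ j, d ((tailCharpoly n L k (s + 2) h).coeff j) = 0)
    (h1 : ∀ j, d ((tailCharpoly n L (k + 1) (s + 1) (by omega)).coeff j) = 0) :
    d (outflow n L ⟨k, by omega⟩) = 0 ∧ d (aRate n L k * bRate n L k) = 0 ∧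
      ∀ j, d ((tailCharpoly n L (k + 2) s (by omega)).coeff j) = 0 :=
  d.apply_eq_zero_of_recurrence (tailCharpoly_recurrence n L k s h) (tailCharpoly_monic ..)
    (tailCharpoly_monic ..) (by simp [tailCharpoly_natDegree])
    ((map_ne_zero_iff _ (FaithfulSMul.algebraMap_injective _ K)).2
      (aRate_mul_bRate_ne_zero (by omega))) h0 h1

section Coefficients

variable (hP0 : ∀ j < n, d ((A7 n L).charmatrix.det.coeff j) = 0)
  (hP1 : ∀ j < n - 1,
    d (((A7 n L).charmatrix.submatrix (delIdx n 0) (delIdx n 0)).det.coeff j) = 0)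
include hP0 hP1

theorem derivation_tailCharpoly_coeff (k s : ℕ) (h : k + (s + 1) = n) :
    (∀ j, d ((tailCharpoly n L k (s + 1) h).coeff j) = 0) ∧
      ∀ j, d ((tailCharpoly n L (k + 1) s (by omega)).coeff j) = 0 := by
  induction k generalizing s with
  | zero =>
    constructor <;> refine d.apply_coeff_eq_zero_of_monic (tailCharpoly_monic ..) ?_ <;>
      intro j hj <;> rw [tailCharpoly_natDegree] at hj
    · rw [tailCharpoly_zero]; exact hP0 j (by omega)
    · rw [tailCharpoly_one]; exact hP1 j (by omega)
  | succ k ih =>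
    obtain ⟨h0, h1⟩ := ih (s + 1) (by omega)
    exact ⟨h1, (derivation_tailCharpoly_step d (by omega) h0 h1).2.2⟩

theorem derivation_outflow_eq_zero (i : Fin n) : d (outflow n L i) = 0 := by
  obtain ⟨s, hs⟩ : ∃ s, (i : ℕ) + (s + 1) = n := ⟨n - i - 1, by omega⟩
  obtain ⟨h0, h1⟩ := derivation_tailCharpoly_coeff d hP0 hP1 i s hs
  rcases s with _ | s
  · simpa [tailCharpoly_last] using h0 0
  · exact (derivation_tailCharpoly_step d hs h0 h1).1

theorem derivation_aRate_mul_bRate_eq_zero (k : ℕ) : d (aRate n L k * bRate n L k) = 0 := by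
  by_cases hk : k < n - 1
  · obtain ⟨s, hs⟩ : ∃ s, k + (s + 2) = n := ⟨n - k - 2, by omega⟩
    obtain ⟨h0, h1⟩ := derivation_tailCharpoly_coeff d hP0 hP1 k (s + 1) hs
    exact (derivation_tailCharpoly_step d hs h0 h1).2.1
  · simp [aRate, hk]

end Coefficients

theorem derivation_X_eq_zero (hn : 0 < n) (hL : L.card ≤ 1)
    (hout : ∀ i, d (outflow n L i) = 0) (hab : ∀ k, d (aRate n L k * bRate n L k) = 0)
    (v : Var n L) : d (X v) = 0 := by
  obtain ⟨q, hq⟩ : ∃ q : ℕ, ∀ i ∈ L, (i : ℕ) = q := by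
    rcases L.eq_empty_or_nonempty with rfl | ⟨q, hq⟩
    · exact ⟨0, by simp⟩
    · exact ⟨q, fun i hi => congrArg _ (card_le_one.mp hL i hi q hq)⟩
  let ℓ : ℕ → K := fun i => if h : i < n then d (leakRate n L ⟨i, h⟩) else 0
  have hℓ : ∀ i ≠ q, ℓ i = 0 := fun i hi => by
    by_cases h : i < n
    · have : ⟨i, h⟩ ∉ L := fun hiL => hi (hq _ hiL)
      simp [ℓ, h, leakRate, this]
    · simp [ℓ, h]
  obtain ⟨hαβ, hleak⟩ := chain_eq_zero (N := n - 1) (α := fun k => d (aRate n L k))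
    (β := fun k => d (bRate n L k)) (x := fun k => algebraMap _ K (aRate n L k))
    (y := fun k => algebraMap _ K (bRate n L k))
    (fun k hk => by simp [aRate, hk, X_ne_zero]) (fun k hk => by simp [bRate, hk, X_ne_zero])
    (fun k _ => by simpa [d.leibniz, Algebra.smul_def] using hab k) hℓ
    (by simpa [outflow, ℓ, hn] using hout ⟨0, hn⟩)
    (fun k hk => by simpa [outflow, ℓ, show k + 1 < n by omega] using hout ⟨k + 1, by omega⟩)
    (by simp [aRate])
  rcases v with (k | k) | ⟨i, hi⟩
  · simpa [aRate, k.isLt] using (hαβ k k.isLt).1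
  · simpa [bRate, k.isLt] using (hαβ k k.isLt).2
  · simpa [ℓ, leakRate, hi] using hleak i (by omega)

end Derivation

end Catenary

/-- For the catenary model with input and output in compartment `1` and at most one leak,
the Jacobian of the coefficient map with respect to all `2(n-1) + |L|` variables, viewed
over the field of rational functions, has full rank `2(n-1) + |L|`. -/
theorem stmt7 (n : ℕ) (hn : 2 ≤ n) (L : Finset (Fin n)) (hL : L.card ≤ 1) :
    (Matrix.of fun (m : Fin (2 * n - 1))
        (v : (Fin (n - 1) ⊕ Fin (n - 1)) ⊕ {i : Fin n // i ∈ L}) =>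
        algebraMap (MvPolynomial ((Fin (n - 1) ⊕ Fin (n - 1)) ⊕ {i : Fin n // i ∈ L}) ℝ)
          (FractionRing
            (MvPolynomial ((Fin (n - 1) ⊕ Fin (n - 1)) ⊕ {i : Fin n // i ∈ L}) ℝ))
          (pderiv v (coeffs7 n L m))).rank = 2 * (n - 1) + L.card := by
  rw [Matrix.rank_of_mulVec_injective, Fintype.card_sum, Fintype.card_sum, Fintype.card_fin,
    Fintype.card_coe, two_mul]
  refine (injective_iff_map_eq_zero (Matrix.mulVecLin _)).2 fun l hl => ?_
  let d := mkDerivation ℝ l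
  have hrow : ∀ m, d (coeffs7 n L m) = 0 := fun m => by
    simpa [d, mkDerivation_apply_eq_sum_pderiv, Matrix.mulVec, dotProduct, Algebra.smul_def,
      mul_comm] using congrFun hl m
  have hP0 : ∀ j < n, d ((A7 n L).charmatrix.det.coeff j) = 0 := fun j hj => by
    simpa [coeffs7, hj] using hrow ⟨j, by omega⟩
  have hP1 : ∀ j < n - 1,
      d (((A7 n L).charmatrix.submatrix (delIdx n 0) (delIdx n 0)).det.coeff j) = 0 :=
    fun j hj => by simpa [coeffs7] using hrow ⟨j + n, by omega⟩
  funext v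
  simpa [d] using Catenary.derivation_X_eq_zero d (by omega) hL
    (Catenary.derivation_outflow_eq_zero d hP0 hP1)
    (Catenary.derivation_aRate_mul_bRate_eq_zero d hP0 hP1) v
end

section
/- Let n ≥ 2 and let L ⊆ {1, …, n} with |L| ≤ 1. Consider the mammillary model's matrix: work in the polynomial ring R over ℝ in the 2(n−1)+|L| variables a_2, …, a_n (with a_i standing for the rate constant k_{i1} of the edge 1 → i), b_2, …, b_n (with b_i standing for k_{1i} of the edge i → 1), and y (the leak rate k_{0q}, present only if L = {q}). Let A be the n×n matrix over R with A_{1,1} = −(a_2 + a_3 + ⋯ + a_n) − (y if 1 ∈ L), A_{i,i} = −b_i − (y if i ∈ L) for 2 ≤ i ≤ n, A_{1,i} = b_i and A_{i,1} = a_i for 2 ≤ i ≤ n, and all other entries 0. Consider the 2n−1 polynomials consisting of the coefficients of X^m for m = 0, …, n−1 in det(X·I − A) ∈ R[X], together with the coefficients of X^m for m = 0, …, n−2 in the determinant of the submatrix of X·I − A obtained by deleting row 1 and column 1. Then the Jacobian matrix of this family with respect to all 2(n−1)+|L| variables, viewed over the fraction field of R, has rank 2(n−1)+|L|. -/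
/-!
A column relation `g` of the Jacobian is the same thing as a derivation
`d = mkDerivation ℝ g` of the parameter ring that kills every coefficient of the input-output
equation, so it suffices to show that such a `d` vanishes. Since `A` is supported on the star
through compartment `1`, with `i, j` ranging over the arms `2, …, n`,
`det (X - A)₁₁ = ∏ᵢ (X - Aᵢᵢ)` and
`det (X - A) = (X - A₁₁) ∏ᵢ (X - Aᵢᵢ) - ∑ᵢ A₁ᵢ Aᵢ₁ ∏_{j ≠ i} (X - Aⱼⱼ)`.
Applying `d` coefficientwise and evaluating at the pairwise distinct nodes `Aᵢᵢ` isolates one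
term at a time: `d` kills every arm entry `Aᵢᵢ`, then every cycle product `A₁ᵢ Aᵢ₁ = aᵢ bᵢ`,
and finally `A₁₁`. On the rates these conditions read `g bᵢ + [leak at i] g y = 0`,
`bᵢ g aᵢ + aᵢ g bᵢ = 0` and `∑ g aᵢ + [leak at 1] g y = 0`, which force `g = 0` because there
is at most one leak.
-/

open Finset MvPolynomial

/-- The compartmental matrix of the `n`-compartment mammillary model with leak set `L`.
Variables: `Sum.inl (Sum.inl t)` is `a_{t+2}` (the rate `k_{t+2,1}` of the edge `1 → t+2`),
`Sum.inl (Sum.inr t)` is `b_{t+2}` (the rate `k_{1,t+2}` of the edge `t+2 → 1`), and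
`Sum.inr ⟨q, _⟩` is the leak rate `y` in compartment `q` (only for `q ∈ L`).
Entries (1-based): `A_{1,1} = -(a₂ + ⋯ + aₙ) - (y if 1 ∈ L)`,
`A_{i,i} = -bᵢ - (y if i ∈ L)` for `2 ≤ i ≤ n`, `A_{1,i} = bᵢ`, `A_{i,1} = aᵢ`,
all other entries `0`. -/
noncomputable def A8 (n : ℕ) (L : Finset (Fin n)) :
    Matrix (Fin n) (Fin n)
      (MvPolynomial ((Fin (n - 1) ⊕ Fin (n - 1)) ⊕ {i : Fin n // i ∈ L}) ℝ) :=
  Matrix.of fun i j =>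
    if i = j then
      (if h0 : i.1 = 0 then -(∑ t : Fin (n - 1), X (Sum.inl (Sum.inl t)))
       else -X (Sum.inl (Sum.inr ⟨i.1 - 1, by have := i.isLt; omega⟩)))
        - (if h : i ∈ L then X (Sum.inr ⟨i, h⟩) else 0)
    else if h : i.1 = 0 ∧ 1 ≤ j.1 then
      X (Sum.inl (Sum.inr ⟨j.1 - 1, by have := j.isLt; omega⟩))
    else if h : j.1 = 0 ∧ 1 ≤ i.1 then
      X (Sum.inl (Sum.inl ⟨i.1 - 1, by have := i.isLt; omega⟩))
    else 0

/-- The `2n - 1` non-monic coefficients of the input-output equation of the mammillary model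
with input and output in compartment `1`: the coefficients of `X^m`, `m = 0, …, n-1`, in
`det (X•I - A)`, together with the coefficients of `X^m`, `m = 0, …, n-2`, in the determinant
of the submatrix of `X•I - A` obtained by deleting row `1` and column `1`. -/
noncomputable def coeffs8 (n : ℕ) (L : Finset (Fin n)) (m : Fin (2 * n - 1)) :
    MvPolynomial ((Fin (n - 1) ⊕ Fin (n - 1)) ⊕ {i : Fin n // i ∈ L}) ℝ :=
  if m.1 < n then (Matrix.charmatrix (A8 n L)).det.coeff m.1
  else ((Matrix.charmatrix (A8 n L)).submatrix (delIdx n 0) (delIdx n 0)).det.coeff (m.1 - n)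

namespace Derivation

variable {R A M ι : Type*} [CommSemiring R] [CommSemiring A] [Algebra R A] [AddCommMonoid M]
  [Module A M] [Module R M] [DecidableEq ι]

theorem leibniz_finsetProd (D : Derivation R A M) (s : Finset ι) (f : ι → A) :
    D (∏ i ∈ s, f i) = ∑ i ∈ s, (∏ j ∈ s.erase i, f j) • D (f i) := by
  induction s using Finset.induction_on with
  | empty => simp
  | insert a s ha ih =>
    rw [prod_insert ha, leibniz, ih, sum_insert ha, erase_insert ha, smul_sum, add_comm]
    congr 1
    refine sum_congr rfl fun i hi => ?_
    rw [erase_insert_of_ne (ne_of_mem_of_not_mem hi ha).symm,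
      prod_insert fun h => ha (mem_of_mem_erase h), smul_smul]

end Derivation

namespace MvPolynomial

variable {R σ A : Type*} [CommSemiring R] [Fintype σ] [AddCommMonoid A]
  [Module R A] [Module (MvPolynomial σ R) A] [IsScalarTower R (MvPolynomial σ R) A]

theorem mkDerivation_eq_sum_pderiv (f : σ → A) (p : MvPolynomial σ R) :
    mkDerivation R f p = ∑ i, pderiv i p • f i := by
  classical
  let D : Derivation R (MvPolynomial σ R) A :=
    ∑ i, (LinearMap.toSpanSingleton (MvPolynomial σ R) A (f i)).compDer (pderiv i)
  have hD : ∀ q, D q = ∑ i, pderiv i q • f i := fun q => by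
    rw [← Derivation.coeFnAddMonoidHom_apply, map_sum, Finset.sum_apply]
    rfl
  rw [show mkDerivation R f = D from derivation_ext fun j => by
    simp [hD, pderiv_X, Pi.single_apply], hD]

end MvPolynomial

section Nodal

open Polynomial Lagrange

namespace Derivation

variable {R A M ι : Type*} [CommRing R] [CommRing A] [Algebra R A] [AddCommGroup M]
  [Module A M] [Module R M] (d : Derivation R A M)

theorem mapCoeffs_eq_zero_of_monic {p : A[X]} (hp : p.Monic)
    (h : ∀ k < p.natDegree, d (p.coeff k) = 0) : d.mapCoeffs p = 0 := by
  ext k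
  rw [mapCoeffs_apply, PolynomialModule.coeff_zero, Finsupp.zero_apply]
  rcases lt_trichotomy k p.natDegree with hk | rfl | hk
  · exact h k hk
  · rw [hp.coeff_natDegree, map_one_eq_zero]
  · rw [coeff_eq_zero_of_natDegree_lt hk, map_zero]

theorem mapCoeffs_nodal [DecidableEq ι] (s : Finset ι) (v : ι → A) :
    d.mapCoeffs (nodal s v)
      = -∑ i ∈ s, nodal (s.erase i) v • PolynomialModule.single A 0 (d (v i)) := by
  simp [nodal, leibniz_finsetProd, ← sum_neg_distrib]

theorem mapCoeffs_nodal_eq_zero [DecidableEq ι] {s : Finset ι} {v : ι → A}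
    (h : ∀ i ∈ s, d (v i) = 0) : d.mapCoeffs (nodal s v) = 0 := by
  rw [mapCoeffs_nodal, sum_eq_zero fun i hi => by simp [h i hi], neg_zero]

end Derivation

namespace PolynomialModule

variable {A M ι : Type*} [CommRing A] [AddCommGroup M] [Module A M] [DecidableEq ι]
  {s : Finset ι} {v : ι → A}

theorem eval_node_sum_nodal_erase_smul (c : ι → M) {t : ι} (ht : t ∈ s) :
    eval (v t) (∑ i ∈ s, nodal (s.erase i) v • single A 0 (c i))
      = (nodal (s.erase t) v).eval (v t) • c t := by
  rw [map_sum, sum_eq_single t (fun i _ hit => ?_) (absurd ht), eval_smul, eval_single, pow_zero,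
    one_smul]
  rw [eval_smul, eval_nodal_at_node (mem_erase.2 ⟨Ne.symm hit, ht⟩), zero_smul]

variable [IsDomain A] [Module.IsTorsionFree A M]

theorem eq_zero_of_nodal_smul_add_sum_eq_zero (hv : Set.InjOn v s) {m : M} {c : ι → M}
    (h : nodal s v • single A 0 m + ∑ i ∈ s, nodal (s.erase i) v • single A 0 (c i) = 0) :
    m = 0 ∧ ∀ t ∈ s, c t = 0 := by
  -- Evaluating at the node `v t` kills every term but the `t`-th one; once all `c t` vanish,
  -- the leading coefficient of the remaining `nodal s v • m` is `m`.
  have hc : ∀ t ∈ s, c t = 0 := fun t ht => by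
    have h' := congrArg (eval (v t)) h
    rw [map_add, eval_smul, eval_nodal_at_node ht, zero_smul, zero_add,
      eval_node_sum_nodal_erase_smul c ht, map_zero] at h'
    refine (smul_eq_zero.1 h').resolve_left (eval_nodal_not_at_node fun i hi hvi => ?_)
    exact (mem_erase.1 hi).1 (hv (mem_of_mem_erase hi) ht hvi.symm)
  refine ⟨?_, hc⟩
  rw [sum_eq_zero fun i hi => by simp [hc i hi], add_zero] at h
  have h' := congrArg (fun p => p.coeff (nodal s v).natDegree) h
  simpa only [PolynomialModule.smul_single_apply, zero_le, if_true, Nat.sub_zero,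
    nodal_monic.coeff_natDegree, one_smul, PolynomialModule.coeff_zero, Finsupp.zero_apply] using h'

end PolynomialModule

theorem Derivation.eq_zero_of_mapCoeffs_nodal_eq_zero {R A M ι : Type*} [CommRing R] [CommRing A]
    [IsDomain A] [Algebra R A] [AddCommGroup M] [Module A M] [Module R M]
    [Module.IsTorsionFree A M] (d : Derivation R A M) [DecidableEq ι] {s : Finset ι}
    {v : ι → A} (hv : Set.InjOn v s) (h : d.mapCoeffs (nodal s v) = 0) : ∀ i ∈ s, d (v i) = 0 := by
  rw [mapCoeffs_nodal, neg_eq_zero] at h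
  exact (PolynomialModule.eq_zero_of_nodal_smul_add_sum_eq_zero hv (m := 0)
    (by simpa using h)).2

end Nodal

theorem Equiv.Perm.eq_swap_of_forall {ι : Type*} [DecidableEq ι] {σ : Equiv.Perm ι} {c : ι}
    (h : ∀ i, σ i = i ∨ σ i = c ∨ i = c) : σ = Equiv.swap c (σ c) := by
  have hc : σ (σ c) = c ∨ σ c = c := by
    rcases h (σ c) with h' | h' | h'
    · exact .inr (σ.injective h')
    · exact .inl h'
    · exact .inr h'
  ext i
  have := h i
  grind [σ.injective.eq_iff]

namespace Matrix

open Lagrange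

/-- The matrix of a compartmental model whose graph is a star with centre `c`. -/
def IsStar {ι R : Type*} [Zero R] (A : Matrix ι ι R) (c : ι) : Prop :=
  ∀ i j, i ≠ j → i ≠ c → j ≠ c → A i j = 0

section CommRing

variable {ι κ R : Type*} [Fintype ι] [DecidableEq ι] [CommRing R] {A : Matrix ι ι R} {c : ι}

theorem IsStar.det_eq (hA : A.IsStar c) :
    A.det = A c c * ∏ i ∈ univ.erase c, A i i
      - ∑ j ∈ univ.erase c, A c j * A j c * ∏ i ∈ (univ.erase c).erase j, A i i := by
  have hsupp (σ : Equiv.Perm ι) (hσ : σ ∉ univ.image (Equiv.swap c)) :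
      ∏ i, A (σ i) i = 0 := by
    by_contra hne
    refine hσ (mem_image.2 ⟨σ c, mem_univ _, (Equiv.Perm.eq_swap_of_forall fun i => ?_).symm⟩)
    by_contra! hi
    exact hne (prod_eq_zero (mem_univ i) (hA _ _ hi.1 hi.2.1 hi.2.2))
  rw [det_apply, ← sum_subset (subset_univ _) fun σ _ hσ => by rw [hsupp σ hσ, smul_zero],
    sum_image fun j _ k _ h => Equiv.swap_injective_of_left c h,
    ← add_sum_erase _ _ (mem_univ c), Equiv.swap_self, Equiv.Perm.sign_refl, one_smul,
    ← mul_prod_erase _ _ (mem_univ c), sub_eq_add_neg, ← sum_neg_distrib]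
  congr 1
  refine sum_congr rfl fun j hj => ?_
  have hjc := ne_of_mem_erase hj
  rw [Equiv.Perm.sign_swap hjc.symm, ← mul_prod_erase _ _ (mem_univ c),
    ← mul_prod_erase _ _ hj, Equiv.swap_apply_left, Equiv.swap_apply_right,
    prod_congr rfl fun i hi => by
      rw [Equiv.swap_apply_of_ne_of_ne (ne_of_mem_erase (mem_of_mem_erase hi))
        (ne_of_mem_erase hi)]]
  simp only [Units.smul_def, Units.val_neg, Units.val_one, neg_smul, one_smul]
  ring

theorem IsStar.charmatrix (hA : A.IsStar c) : A.charmatrix.IsStar c := fun i j hij hi hj => by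
  rw [charmatrix_apply_ne _ _ _ hij, hA i j hij hi hj, map_zero, neg_zero]

theorem IsStar.charpoly_eq (hA : A.IsStar c) :
    A.charpoly = (Polynomial.X - Polynomial.C (A c c)) * nodal (univ.erase c) A.diag
      - ∑ j ∈ univ.erase c,
          Polynomial.C (A c j * A j c) * nodal ((univ.erase c).erase j) A.diag := by
  have hprod (s : Finset ι) : ∏ i ∈ s, A.charmatrix i i = nodal s A.diag :=
    prod_congr rfl fun i _ => charmatrix_apply_eq ..
  rw [Matrix.charpoly, hA.charmatrix.det_eq, hprod, charmatrix_apply_eq]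
  refine congrArg _ (sum_congr rfl fun j hj => ?_)
  have hjc := ne_of_mem_erase hj
  rw [charmatrix_apply_ne _ _ _ hjc.symm, charmatrix_apply_ne _ _ _ hjc, neg_mul_neg, ← map_mul,
    hprod]

theorem IsStar.det_charmatrix_submatrix (hA : A.IsStar c) {e : κ → ι}
    [Fintype κ] [DecidableEq κ] (he : Function.Injective e)
    (hrange : ∀ i, i ∈ Set.range e ↔ i ≠ c) :
    (A.charmatrix.submatrix e e).det = nodal (univ.erase c) A.diag := by
  have hdiag : A.charmatrix.submatrix e e
      = diagonal fun k => Polynomial.X - Polynomial.C (A (e k) (e k)) := by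
    ext k l
    by_cases hkl : k = l
    · simp [hkl, charmatrix_apply_eq]
    · rw [diagonal_apply_ne _ hkl, submatrix_apply,
        hA.charmatrix _ _ (he.ne hkl) ((hrange _).1 ⟨k, rfl⟩) ((hrange _).1 ⟨l, rfl⟩)]
  have himage : univ.image e = univ.erase c := by
    ext i
    simpa using hrange i
  rw [hdiag, det_diagonal, nodal, ← himage, prod_image he.injOn]
  rfl

end CommRing

variable {R B M ι : Type*} [CommRing R] [CommRing B] [IsDomain B] [Algebra R B] [AddCommGroup M]
  [Module B M] [Module R M] [Module.IsTorsionFree B M] [Fintype ι] [DecidableEq ι]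
  {A : Matrix ι ι B} {c : ι}

theorem IsStar.derivation_eq_zero_of_mapCoeffs_charpoly_eq_zero (hA : A.IsStar c)
    (d : Derivation R B M) (hinj : Set.InjOn A.diag (univ.erase c))
    (harm : ∀ j ∈ univ.erase c, d (A j j) = 0) (h : d.mapCoeffs A.charpoly = 0) :
    d (A c c) = 0 ∧ ∀ j ∈ univ.erase c, d (A c j * A j c) = 0 := by
  have hnodal (s : Finset ι) (hs : s ⊆ univ.erase c) : d.mapCoeffs (nodal s A.diag) = 0 :=
    d.mapCoeffs_nodal_eq_zero fun i hi => harm i (hs hi)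
  rw [hA.charpoly_eq, map_sub, Derivation.leibniz, hnodal _ subset_rfl, map_sum,
    sum_congr rfl fun j hj => by
      rw [Derivation.leibniz, hnodal _ (erase_subset _ _)]] at h
  simp only [smul_zero, zero_add, map_sub, Derivation.mapCoeffs_X, Derivation.mapCoeffs_C, zero_sub,
    smul_neg, ← neg_add', neg_eq_zero] at h
  exact PolynomialModule.eq_zero_of_nodal_smul_add_sum_eq_zero hinj h

end Matrix

section Mammillary

variable {n : ℕ} {L : Finset (Fin n)}

abbrev MammillaryVar (n : ℕ) (L : Finset (Fin n)) :=
  (Fin (n - 1) ⊕ Fin (n - 1)) ⊕ {i : Fin n // i ∈ L}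

theorem delIdx_zero_val (k : Fin (n - 1)) : (delIdx n 0 k : ℕ) = k + 1 := by
  simp [delIdx]

theorem delIdx_zero_injective : Function.Injective (delIdx n 0) := fun k l h => by
  have := congrArg Fin.val h
  rw [delIdx_zero_val, delIdx_zero_val] at this
  exact Fin.ext (by omega)

theorem mem_range_delIdx_zero [NeZero n] (i : Fin n) :
    i ∈ Set.range (delIdx n 0) ↔ i ≠ 0 := by
  constructor
  · rintro ⟨k, rfl⟩ h
    simpa [delIdx_zero_val] using congrArg Fin.val h
  · intro hi
    have : i.1 ≠ 0 := fun h => hi (Fin.ext h)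
    exact ⟨⟨i - 1, by omega⟩, Fin.ext (by rw [delIdx_zero_val, Fin.val_mk]; omega)⟩

theorem delIdx_zero_ne_zero [NeZero n] (t : Fin (n - 1)) : delIdx n 0 t ≠ 0 :=
  (mem_range_delIdx_zero _).1 ⟨t, rfl⟩

theorem A8_zero_zero [NeZero n] :
    A8 n L 0 0
      = -(∑ t, X (.inl (.inl t))) - (if h : 0 ∈ L then X (.inr ⟨0, h⟩) else 0) := by
  simp [A8]

theorem A8_delIdx_delIdx (t : Fin (n - 1)) :
    A8 n L (delIdx n 0 t) (delIdx n 0 t)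
      = -X (.inl (.inr t)) - (if h : delIdx n 0 t ∈ L then X (.inr ⟨_, h⟩) else 0) := by
  simp [A8, delIdx_zero_val]

theorem A8_zero_delIdx [NeZero n] (t : Fin (n - 1)) :
    A8 n L 0 (delIdx n 0 t) = X (.inl (.inr t)) := by
  simp [A8, (delIdx_zero_ne_zero t).symm, delIdx_zero_val]

theorem A8_delIdx_zero [NeZero n] (t : Fin (n - 1)) :
    A8 n L (delIdx n 0 t) 0 = X (.inl (.inl t)) := by
  simp [A8, delIdx_zero_ne_zero t, delIdx_zero_val]

theorem A8_isStar [NeZero n] : (A8 n L).IsStar 0 := fun i j hij hi hj => by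
  simp [A8, hij, hi, hj]

theorem A8_diag_injOn [NeZero n] : Set.InjOn (A8 n L).diag ↑(univ.erase (0 : Fin n)) := by
  intro i hi j hj hij
  obtain ⟨s, rfl⟩ := (mem_range_delIdx_zero i).2 (ne_of_mem_erase hi)
  obtain ⟨t, rfl⟩ := (mem_range_delIdx_zero j).2 (ne_of_mem_erase hj)
  have := congrArg (pderiv (.inl (.inr s))) hij
  simp [A8_delIdx_delIdx, pderiv_X, Pi.single_apply, apply_dite] at this
  rw [this]

variable {M : Type*} [AddCommGroup M] [Module (MvPolynomial (MammillaryVar n L) ℝ) M]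
  [Module ℝ M] [IsScalarTower ℝ (MvPolynomial (MammillaryVar n L) ℝ) M]
  [Module.IsTorsionFree (MvPolynomial (MammillaryVar n L) ℝ) M]

theorem eq_zero_of_mkDerivation_A8_eq_zero [NeZero n] (hL : L.card ≤ 1)
    (g : MammillaryVar n L → M)
    (hcenter : mkDerivation ℝ g (A8 n L 0 0) = 0)
    (harm : ∀ t, mkDerivation ℝ g (A8 n L (delIdx n 0 t) (delIdx n 0 t)) = 0)
    (hcycle : ∀ t, mkDerivation ℝ g (A8 n L 0 (delIdx n 0 t) * A8 n L (delIdx n 0 t) 0) = 0) :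
    g = 0 := by
  set leak : Fin n → M := fun i => if h : i ∈ L then g (.inr ⟨i, h⟩) else 0
  have hleak (i : Fin n) :
      mkDerivation ℝ g (if h : i ∈ L then X (.inr ⟨i, h⟩) else 0) = leak i := by
    by_cases h : i ∈ L <;> simp [leak, h, MvPolynomial.mkDerivation_X]
  replace hcenter : ∑ t, g (.inl (.inl t)) + leak 0 = 0 := by
    rwa [A8_zero_zero, ← neg_add', map_neg, neg_eq_zero, map_add, map_sum, hleak,
      sum_congr rfl fun t _ => MvPolynomial.mkDerivation_X ..] at hcenter
  replace harm (t) : g (.inl (.inr t)) + leak (delIdx n 0 t) = 0 := by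
    have h := harm t
    rwa [A8_delIdx_delIdx, ← neg_add', map_neg, neg_eq_zero, map_add, hleak,
      MvPolynomial.mkDerivation_X] at h
  replace hcycle (t) :
      (X (.inl (.inr t)) : MvPolynomial (MammillaryVar n L) ℝ) • g (.inl (.inl t))
        + (X (.inl (.inl t)) : MvPolynomial (MammillaryVar n L) ℝ) • g (.inl (.inr t)) = 0 := by
    simpa only [A8_zero_delIdx, A8_delIdx_zero, Derivation.leibniz, MvPolynomial.mkDerivation_X]
      using hcycle t
  have hfree (t) (ht : delIdx n 0 t ∉ L) : g (.inl (.inr t)) = 0 ∧ g (.inl (.inl t)) = 0 := by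
    have hb : g (.inl (.inr t)) = 0 := by simpa [leak, ht] using harm t
    exact ⟨hb, by simpa [hb] using hcycle t⟩
  have hy (j : {i // i ∈ L}) : g (.inr j) = 0 := by
    obtain ⟨q, hq⟩ := j
    have honly (i) (hi : i ∈ L) : i = q := card_le_one.1 hL i hi q hq
    by_cases hq0 : q = 0
    · subst hq0
      have ha : ∑ t, g (.inl (.inl t)) = 0 := sum_eq_zero fun t _ =>
        (hfree t fun h => (mem_range_delIdx_zero _).1 ⟨t, rfl⟩ (honly _ h)).2
      simpa [leak, hq, ha] using hcenter
    · obtain ⟨t₀, rfl⟩ := (mem_range_delIdx_zero q).2 hq0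
      have ha : g (.inl (.inl t₀)) = 0 := by
        rw [sum_eq_single t₀
          (fun t _ ht => (hfree t fun h => ht (delIdx_zero_injective (honly _ h))).2)
          (by simp)] at hcenter
        have h0 : (0 : Fin n) ∉ L := fun h => hq0 (honly 0 h).symm
        simpa [leak, h0] using hcenter
      have hb : g (.inl (.inr t₀)) = 0 := by simpa [ha] using hcycle t₀
      simpa [leak, hq, hb] using harm t₀
  have hb (t) : g (.inl (.inr t)) = 0 := by simpa [leak, hy] using harm t
  funext v
  rcases v with (t | t) | j
  · simpa [hb] using hcycle t
  · exact hb t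
  · exact hy j

theorem eq_zero_of_mkDerivation_coeffs8_eq_zero [NeZero n] (hL : L.card ≤ 1)
    (g : MammillaryVar n L → M) (h : ∀ m, mkDerivation ℝ g (coeffs8 n L m) = 0) : g = 0 := by
  set d := mkDerivation ℝ g
  have hsub : ((A8 n L).charmatrix.submatrix (delIdx n 0) (delIdx n 0)).det
      = Lagrange.nodal (univ.erase 0) (A8 n L).diag :=
    A8_isStar.det_charmatrix_submatrix delIdx_zero_injective mem_range_delIdx_zero
  have harm : ∀ i ∈ univ.erase (0 : Fin n), d ((A8 n L).diag i) = 0 := by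
    refine d.eq_zero_of_mapCoeffs_nodal_eq_zero A8_diag_injOn
      (d.mapCoeffs_eq_zero_of_monic Lagrange.nodal_monic fun k hk => ?_)
    rw [Lagrange.natDegree_nodal, card_erase_of_mem (mem_univ _), card_univ,
      Fintype.card_fin] at hk
    have := h ⟨n + k, by omega⟩
    rwa [coeffs8, if_neg (by simp), hsub, Nat.add_sub_cancel_left] at this
  have hchar : d.mapCoeffs (A8 n L).charpoly = 0 :=
    d.mapCoeffs_eq_zero_of_monic (Matrix.charpoly_monic _) fun k hk => by
      rw [Matrix.charpoly_natDegree_eq_dim, Fintype.card_fin] at hk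
      have := h ⟨k, by omega⟩
      rwa [coeffs8, if_pos hk] at this
  obtain ⟨hcenter, hcycle⟩ :=
    A8_isStar.derivation_eq_zero_of_mapCoeffs_charpoly_eq_zero d A8_diag_injOn harm hchar
  exact eq_zero_of_mkDerivation_A8_eq_zero hL g hcenter
    (fun t => harm _ (mem_erase.2 ⟨delIdx_zero_ne_zero t, mem_univ _⟩))
    (fun t => hcycle _ (mem_erase.2 ⟨delIdx_zero_ne_zero t, mem_univ _⟩))

end Mammillary

/-- For the mammillary model with input and output in compartment `1` and at most one leak,
the Jacobian of the coefficient map with respect to all `2(n-1) + |L|` variables, viewed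
over the field of rational functions, has full rank `2(n-1) + |L|`. -/
theorem stmt8 (n : ℕ) (hn : 2 ≤ n) (L : Finset (Fin n)) (hL : L.card ≤ 1) :
    (Matrix.of fun (m : Fin (2 * n - 1))
        (v : (Fin (n - 1) ⊕ Fin (n - 1)) ⊕ {i : Fin n // i ∈ L}) =>
        algebraMap (MvPolynomial ((Fin (n - 1) ⊕ Fin (n - 1)) ⊕ {i : Fin n // i ∈ L}) ℝ)
          (FractionRing
            (MvPolynomial ((Fin (n - 1) ⊕ Fin (n - 1)) ⊕ {i : Fin n // i ∈ L}) ℝ))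
          (pderiv v (coeffs8 n L m))).rank = 2 * (n - 1) + L.card := by
  have : NeZero n := ⟨by omega⟩
  rw [← Matrix.rank_transpose, LinearIndependent.rank_matrix]
  · simp [Fintype.card_sum]
    omega
  rw [Fintype.linearIndependent_iff]
  intro g hg
  refine congrFun (eq_zero_of_mkDerivation_coeffs8_eq_zero hL g fun m => ?_)
  have hm := congrFun hg m
  rw [Finset.sum_apply, Pi.zero_apply] at hm
  rw [mkDerivation_eq_sum_pderiv, ← hm]
  refine sum_congr rfl fun v _ => ?_
  rw [Algebra.smul_def, mul_comm]
  rfl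
end

section
/- Let n ≥ 3 and let L ⊆ {1, …, n}. Work in ℝ[x_1, …, x_n, (y_ℓ)_{ℓ∈L}], with z_ℓ = x_ℓ + y_ℓ for ℓ ∈ L and z_ℓ = x_ℓ otherwise. Consider the 2n polynomials: e_m(z_1, …, z_n) for m = 1, …, n−1; e_n(z_1, …, z_n) − x_1 x_2 ⋯ x_n; the constant 1; and e_j(z_2, …, z_n) for j = 1, …, n−1, where e_m denotes the m-th elementary symmetric polynomial in the listed arguments. Then the Jacobian matrix of this family with respect to the n+|L| variables, viewed over the field of rational functions in those variables, has rank n+|L| if and only if |L| ≤ 1. -/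
/-!
For `v` indexed by the variables, the product of the Jacobian with `v` is the derivation
`D_v = ∑_w v_w ∂_w` applied to the coefficients, so `v` is in the kernel iff `D_v` kills every
coefficient. All coefficients but `eₙ(z) - x₁⋯xₙ` are polynomials in the `z_k`, and the rows
`e₁(z)` and `e_j(z₂, …, zₙ)` form a Vandermonde-type system in the values `D_v(z_k)`, which
forces `D_v(z_k) = 0` for all `k`; the remaining row then reads `D_v(x₁⋯xₙ) = 0`. Thus `v` is in
the kernel iff `v_{x_k} + v_{y_k} = 0` for all `k` (no `y_k` term when `k ∉ L`) and
`∑_k v_{x_k} ∏_{j ≠ k} x_j = 0`. With at most one leak this forces `v = 0`. With two leaks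
`ℓ ≠ ℓ'`, each `x_ℓ (∂_{x_ℓ} - ∂_{y_ℓ})` kills all `z_k` and fixes `x₁⋯xₙ`, so
`x_ℓ (∂_{x_ℓ} - ∂_{y_ℓ}) - x_ℓ' (∂_{x_ℓ'} - ∂_{y_ℓ'})` is in the kernel.
-/

open Finset MvPolynomial

/-- In `ℝ[x₁, …, xₙ, (y_ℓ)_{ℓ ∈ L}]`: `z_ℓ = x_ℓ + y_ℓ` if `ℓ ∈ L` and `z_ℓ = x_ℓ`
otherwise. -/
noncomputable def z9 (n : ℕ) (L : Finset (Fin n)) (ℓ : Fin n) :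
    MvPolynomial (Fin n ⊕ {i : Fin n // i ∈ L}) ℝ :=
  X (Sum.inl ℓ) + if h : ℓ ∈ L then X (Sum.inr ⟨ℓ, h⟩) else 0

/-- The `2n` coefficients of the input-output equation of the `n`-compartment cycle model
with input and output in compartment `1` and leak set `L`:
`e₁(z), …, e_{n-1}(z)`, `eₙ(z) - x₁⋯xₙ`, the constant `1`, and
`eⱼ(z₂, …, zₙ)` for `j = 1, …, n-1`. -/
noncomputable def coeffs9 (n : ℕ) (L : Finset (Fin n)) (m : Fin (2 * n)) :
    MvPolynomial (Fin n ⊕ {i : Fin n // i ∈ L}) ℝ :=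
  if m.1 < n - 1 then esymOn Finset.univ (m.1 + 1) (z9 n L)
  else if m.1 = n - 1 then
    esymOn Finset.univ n (z9 n L) - ∏ i : Fin n, X (Sum.inl i)
  else if m.1 = n then 1
  else esymOn (Finset.univ.filter (fun i : Fin n => 1 ≤ i.1)) (m.1 - n) (z9 n L)

open scoped Matrix

namespace Finset

variable {ι M : Type*} [DecidableEq ι] [AddCommMonoid M]

theorem sum_powersetCard_succ_sum_erase (s : Finset ι) (m : ℕ) (F : Finset ι → ι → M) :
    ∑ t ∈ powersetCard (m + 1) s, ∑ i ∈ t, F (t.erase i) i =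
      ∑ i ∈ s, ∑ t ∈ powersetCard m (s.erase i), F t i := by
  rw [sum_comm' (t' := s) (s' := fun i => (powersetCard (m + 1) s).filter (i ∈ ·))]
  · refine sum_congr rfl fun i hi => ?_
    refine sum_nbij' (·.erase i) (insert i) ?_ ?_ ?_ ?_ fun _ _ => rfl
    · intro t ht
      simp only [mem_filter, mem_powersetCard] at ht
      simp only [mem_powersetCard, card_erase_of_mem ht.2, ht.1.2]
      exact ⟨erase_subset_erase i ht.1.1, rfl⟩
    · intro t ht
      simp only [mem_powersetCard, subset_erase] at ht
      simp only [mem_filter, mem_powersetCard, mem_insert_self, and_true,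
        card_insert_of_notMem ht.1.2, ht.2]
      exact insert_subset hi ht.1.1
    · intro t ht
      simp only [mem_filter, mem_powersetCard] at ht
      exact insert_erase ht.2
    · intro t ht
      simp only [mem_powersetCard, subset_erase] at ht
      exact erase_insert ht.1.2
  · intro t i
    simp only [mem_powersetCard, mem_filter]
    constructor
    · rintro ⟨ht, hi⟩
      exact ⟨⟨ht, hi⟩, ht.1 hi⟩
    · rintro ⟨ht, -⟩
      exact ht

end Finset

theorem map_esymOn {σ R S : Type*} [CommSemiring R] [CommSemiring S] (f : R →+* S)
    (s : Finset σ) (m : ℕ) (v : σ → R) : f (esymOn s m v) = esymOn s m (f ∘ v) := by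
  simp [esymOn, map_sum, map_prod]

theorem prod_add_eq_sum_esymOn {ι R : Type*} [CommRing R] (s : Finset ι) (v : ι → R) (x : R) :
    ∏ i ∈ s, (x + v i) = ∑ j ∈ range (#s + 1), esymOn s j v * x ^ (#s - j) := by
  have := congrArg (Polynomial.eval x) (Multiset.prod_X_add_C_eq_sum_esymm (s.val.map v))
  simpa [Polynomial.eval_multiset_prod, Polynomial.eval_finsetSum, Polynomial.eval_prod, esymOn,
    Finset.esymm_map_val] using this

namespace Derivation

variable {R A M : Type*} [CommSemiring R] [CommSemiring A] [AddCommMonoid M] [Algebra R A]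
  [Module A M] [Module R M] (D : Derivation R A M)

theorem map_finset_prod {ι : Type*} [DecidableEq ι] (s : Finset ι) (f : ι → A) :
    D (∏ i ∈ s, f i) = ∑ i ∈ s, (∏ j ∈ s.erase i, f j) • D (f i) := by
  induction s using Finset.induction_on with
  | empty => simp
  | insert a s ha ih =>
    rw [prod_insert ha, leibniz, ih, sum_insert ha, erase_insert ha, smul_sum, add_comm]
    congr 1
    refine sum_congr rfl fun i hi => ?_
    rw [erase_insert_of_ne (ne_of_mem_of_not_mem hi ha).symm,
      prod_insert fun h => ha (mem_of_mem_erase h), smul_smul]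

theorem map_esymOn {ι : Type*} [DecidableEq ι] (s : Finset ι) (m : ℕ) (v : ι → A) :
    D (esymOn s (m + 1) v) = ∑ i ∈ s, esymOn (s.erase i) m v • D (v i) := by
  simp only [esymOn, map_sum, map_finset_prod, sum_smul]
  exact sum_powersetCard_succ_sum_erase s m fun t i => (∏ j ∈ t, v j) • D (v i)

theorem map_esymOn_eq_zero {ι : Type*} [DecidableEq ι] {s : Finset ι} {v : ι → A}
    (hv : ∀ i ∈ s, D (v i) = 0) (m : ℕ) : D (esymOn s m v) = 0 := by
  cases m with
  | zero => simp [esymOn]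
  | succ m => exact (map_esymOn D s m v).trans (sum_eq_zero fun i hi => by rw [hv i hi, smul_zero])

end Derivation

theorem eq_zero_of_sum_mul_esymOn_erase_eq_zero {ι R : Type*} [DecidableEq ι] [CommRing R]
    [IsDomain R] {S : Finset ι} {u b : ι → R} (hu : Set.InjOn u S)
    (h : ∀ j < #S, ∑ k ∈ S, b k * esymOn (S.erase k) j u = 0) {s : ι} (hs : s ∈ S) :
    b s = 0 := by
  have hcard : #S - 1 + 1 = #S := Nat.sub_add_cancel (card_pos.2 ⟨s, hs⟩)
  have key : ∑ k ∈ S, b k * ∏ r ∈ S.erase k, (-u s + u r) = 0 := by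
    calc ∑ k ∈ S, b k * ∏ r ∈ S.erase k, (-u s + u r)
        = ∑ j ∈ range #S, (-u s) ^ (#S - 1 - j) * ∑ k ∈ S, b k * esymOn (S.erase k) j u := by
          simp_rw [prod_add_eq_sum_esymOn, mul_sum]
          rw [sum_comm]
          refine sum_congr rfl fun k hk => ?_
          rw [card_erase_of_mem hk, hcard]
          exact sum_congr rfl fun j _ => by ring
      _ = 0 := sum_eq_zero fun j hj => by rw [h j (mem_range.1 hj), mul_zero]
  rw [← add_sum_erase _ _ hs, sum_eq_zero fun k hk => ?_, add_zero] at key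
  · refine (mul_eq_zero.1 key).resolve_right (prod_ne_zero_iff.2 fun r hr => ?_)
    rw [neg_add_eq_sub, sub_ne_zero]
    exact fun h => ne_of_mem_erase hr (hu (mem_of_mem_erase hr) hs h)
  · rw [prod_eq_zero (mem_erase.2 ⟨(ne_of_mem_erase hk).symm, hs⟩) (neg_add_cancel _), mul_zero]

theorem Matrix.rank_eq_card_width_iff {m n K : Type*} [Fintype m] [Fintype n] [Field K]
    (M : Matrix m n K) : M.rank = Fintype.card n ↔ ∀ v, M *ᵥ v = 0 → v = 0 := by
  rw [← Matrix.ker_mulVecLin_eq_bot_iff, ← Submodule.finrank_eq_zero, Matrix.rank]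
  have := LinearMap.finrank_range_add_finrank_ker M.mulVecLin
  rw [Module.finrank_fintype_fun_eq_card] at this
  omega

namespace MvPolynomial

variable {σ R A : Type*} [Fintype σ] [CommRing R] [CommRing A] [Algebra R A]
  [Algebra (MvPolynomial σ R) A] [IsScalarTower R (MvPolynomial σ R) A]

noncomputable def directionalDeriv (v : σ → A) : Derivation R (MvPolynomial σ R) A :=
  ∑ i, v i • (Algebra.linearMap (MvPolynomial σ R) A).compDer (pderiv i)

theorem directionalDeriv_apply (v : σ → A) (f : MvPolynomial σ R) :
    directionalDeriv v f = ∑ i, v i * algebraMap _ A (pderiv i f) := by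
  rw [directionalDeriv, ← Derivation.coeFnAddMonoidHom_apply, map_sum, Finset.sum_apply]
  simp [Derivation.coeFnAddMonoidHom_apply]

theorem directionalDeriv_X (v : σ → A) (i : σ) :
    directionalDeriv v (X i : MvPolynomial σ R) = v i := by
  classical
  simp [directionalDeriv_apply, pderiv_X, Pi.single_apply]

theorem pderiv_matrix_mulVec {ι : Type*} (f : ι → MvPolynomial σ R) (v : σ → A) :
    (Matrix.of fun m i => algebraMap _ A (pderiv i (f m))) *ᵥ v =
      fun m => directionalDeriv v (f m) := by
  ext m
  simp [Matrix.mulVec, dotProduct, directionalDeriv_apply, mul_comm]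

end MvPolynomial

section CycleModel

variable {n : ℕ} {L : Finset (Fin n)}

local notation "𝓡" => MvPolynomial (Fin n ⊕ {i : Fin n // i ∈ L}) ℝ

local notation "𝓚" => FractionRing 𝓡

theorem z9_injective : Function.Injective (z9 n L) := by
  intro i j h
  have := congrArg (pderiv (Sum.inl i)) h
  unfold z9 at this
  split_ifs at this <;> simpa [pderiv_X, Pi.single_apply, eq_comm] using this

theorem directionalDeriv_z9 (v : Fin n ⊕ {i : Fin n // i ∈ L} → 𝓚) (k : Fin n) :
    directionalDeriv v (z9 n L k) = v (.inl k) + if h : k ∈ L then v (.inr ⟨k, h⟩) else 0 := by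
  unfold z9
  split_ifs <;> simp [directionalDeriv_X]

theorem directionalDeriv_prod_X (v : Fin n ⊕ {i : Fin n // i ∈ L} → 𝓚) :
    directionalDeriv v (∏ i, X (.inl i) : 𝓡) =
      ∑ k, algebraMap 𝓡 𝓚 (∏ j ∈ univ.erase k, X (.inl j)) * v (.inl k) := by
  simp [Derivation.map_finset_prod, directionalDeriv_X, Algebra.smul_def]

theorem map_z9_eq_zero_of_forall_map_coeffs9_eq_zero (hn : 2 ≤ n) (D : Derivation ℝ 𝓡 𝓚)
    (h : ∀ m, D (coeffs9 n L m) = 0) (k : Fin n) : D (z9 n L k) = 0 := by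
  set k₀ : Fin n := ⟨0, by omega⟩
  have hS : univ.filter (fun i : Fin n => 1 ≤ i.1) = univ.erase k₀ := by
    ext i
    simp [k₀, Fin.ext_iff, Nat.one_le_iff_ne_zero]
  have hsum : ∑ k, D (z9 n L k) = 0 := by
    have := h ⟨0, by omega⟩
    rw [coeffs9, if_pos (by dsimp only; omega), D.map_esymOn] at this
    simpa [esymOn] using this
  have hinj : Set.InjOn (algebraMap 𝓡 𝓚 ∘ z9 n L) (univ.erase k₀) :=
    ((IsFractionRing.injective 𝓡 𝓚).comp z9_injective).injOn
  have hS0 : ∀ k ∈ univ.erase k₀, D (z9 n L k) = 0 := by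
    refine fun k hk => eq_zero_of_sum_mul_esymOn_erase_eq_zero (b := fun k => D (z9 n L k))
      hinj (fun j hj => ?_) hk
    rw [card_erase_of_mem (mem_univ _), card_univ, Fintype.card_fin] at hj
    have := h ⟨n + (j + 1), by omega⟩
    rw [coeffs9, if_neg (by dsimp only; omega), if_neg (by dsimp only; omega),
      if_neg (by dsimp only; omega), hS,
      Nat.add_sub_cancel_left, D.map_esymOn] at this
    simpa [Algebra.smul_def, map_esymOn, mul_comm] using this
  by_cases hk : k = k₀
  · rw [hk]
    rwa [← add_sum_erase _ _ (mem_univ k₀), sum_eq_zero hS0, add_zero] at hsum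
  · exact hS0 k (mem_erase.2 ⟨hk, mem_univ k⟩)

theorem forall_map_coeffs9_eq_zero_iff (hn : 2 ≤ n) (D : Derivation ℝ 𝓡 𝓚) :
    (∀ m, D (coeffs9 n L m) = 0) ↔ (∀ k, D (z9 n L k) = 0) ∧ D (∏ i, X (.inl i) : 𝓡) = 0 := by
  constructor
  · intro h
    have hz := map_z9_eq_zero_of_forall_map_coeffs9_eq_zero hn D h
    refine ⟨hz, ?_⟩
    have := h ⟨n - 1, by omega⟩
    rwa [coeffs9, if_neg (by dsimp only; omega), if_pos rfl, map_sub,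
      D.map_esymOn_eq_zero fun i _ => hz i, zero_sub, neg_eq_zero] at this
  · rintro ⟨hz, hx⟩ m
    unfold coeffs9
    split_ifs <;> simp [D.map_esymOn_eq_zero fun i _ => hz i, hx]

theorem eq_zero_of_directionalDeriv_z9_eq_zero (hL : #L ≤ 1)
    {v : Fin n ⊕ {i : Fin n // i ∈ L} → 𝓚} (hz : ∀ k, directionalDeriv v (z9 n L k) = 0)
    (hx : directionalDeriv v (∏ i, X (.inl i) : 𝓡) = 0) : v = 0 := by
  simp only [directionalDeriv_z9] at hz
  rw [directionalDeriv_prod_X] at hx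
  have hinl_of_notMem : ∀ k ∉ L, v (.inl k) = 0 := fun k hk => by simpa [hk] using hz k
  have hinl : ∀ k, v (.inl k) = 0 := by
    intro k
    by_cases hk : k ∈ L
    · have hothers : ∀ j ≠ k, v (.inl j) = 0 := fun j hj =>
        hinl_of_notMem j fun hjL => hj (card_le_one.1 hL j hjL k hk)
      rw [sum_eq_single k (fun j _ hj => by rw [hothers j hj, mul_zero]) (by simp)] at hx
      refine (mul_eq_zero.1 hx).resolve_left ?_
      simp [prod_ne_zero_iff, X_ne_zero]
    · exact hinl_of_notMem k hk
  funext w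
  rcases w with k | ⟨k, hk⟩
  · exact hinl k
  · simpa [hk, hinl k] using hz k

theorem exists_ne_zero_directionalDeriv_z9_eq_zero (hL : 1 < #L) :
    ∃ v : Fin n ⊕ {i : Fin n // i ∈ L} → 𝓚, v ≠ 0 ∧
      (∀ k, directionalDeriv v (z9 n L k) = 0) ∧ directionalDeriv v (∏ i, X (.inl i) : 𝓡) = 0 := by
  obtain ⟨a, ha, b, hb, hab⟩ := one_lt_card.1 hL
  let x : Fin n → 𝓚 := fun k => algebraMap 𝓡 𝓚 (X (.inl k))
  let c : Fin n → 𝓚 := Pi.single a (x a) - Pi.single b (x b)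
  refine ⟨Sum.elim c fun l => -c l, fun h => ?_, fun k => ?_, ?_⟩
  · have := congrFun h (.inl a)
    simp [c, x, Pi.single_apply, hab, X_ne_zero] at this
  · rw [directionalDeriv_z9]
    by_cases hk : k ∈ L
    · simp [hk]
    · have hka : k ≠ a := by rintro rfl; exact hk ha
      have hkb : k ≠ b := by rintro rfl; exact hk hb
      simp [hk, c, Pi.single_apply, hka, hkb]
  · rw [directionalDeriv_prod_X]
    simp [c, x, Pi.single_apply, mul_sub, sum_sub_distrib, prod_erase_mul]

end CycleModel

/-- The cycle model with input and output both in compartment `1` and leak set `L` is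
generically locally identifiable iff `|L| ≤ 1`: the Jacobian of its coefficient map with
respect to the `n + |L|` variables, viewed over the field of rational functions, has full
rank `n + |L|` if and only if `|L| ≤ 1`. -/
theorem stmt9 (n : ℕ) (hn : 3 ≤ n) (L : Finset (Fin n)) :
    (Matrix.of fun (m : Fin (2 * n)) (v : Fin n ⊕ {i : Fin n // i ∈ L}) =>
        algebraMap (MvPolynomial (Fin n ⊕ {i : Fin n // i ∈ L}) ℝ)
          (FractionRing (MvPolynomial (Fin n ⊕ {i : Fin n // i ∈ L}) ℝ))
          (pderiv v (coeffs9 n L m))).rank = n + L.card ↔ L.card ≤ 1 := by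
  have hcard : Fintype.card (Fin n ⊕ {i : Fin n // i ∈ L}) = n + #L := by simp
  rw [← hcard, Matrix.rank_eq_card_width_iff]
  simp only [pderiv_matrix_mulVec, funext_iff (α := Fin (2 * n)), Pi.zero_apply,
    forall_map_coeffs9_eq_zero_iff (show 2 ≤ n by omega)]
  constructor
  · intro h
    by_contra! hL
    obtain ⟨v, hv, hz, hx⟩ := exists_ne_zero_directionalDeriv_z9_eq_zero hL
    exact hv (h v ⟨hz, hx⟩)
  · exact fun hL v ⟨hz, hx⟩ => eq_zero_of_directionalDeriv_z9_eq_zero hL hz hx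
end

section
/- Let n ≥ 3, 1 ≤ p ≤ n, and let L ⊆ {1, …, n}. Suppose there exist distinct i, j ∈ L with i ≥ p and j ≥ p. Work in ℝ[x_1, …, x_n, (y_ℓ)_{ℓ∈L}], with z_ℓ = x_ℓ + y_ℓ for ℓ ∈ L and z_ℓ = x_ℓ otherwise, and consider the 2n−p+1 polynomials: e_m(z_1, …, z_n) for m = 1, …, n−1; e_n(z_1, …, z_n) − x_1 x_2 ⋯ x_n; κ := x_1 x_2 ⋯ x_{p−1}; and e_j(z_{p+1}, …, z_n) · κ for j = 1, …, n−p, where e_m denotes the m-th elementary symmetric polynomial in the listed arguments. Then the Jacobian matrix of this family with respect to the n+|L| variables, viewed over the field of rational functions in those variables, has rank strictly less than n+|L|. In fact, the four columns of the Jacobian corresponding to the variables x_i, y_i, x_j, y_j are linearly dependent over that field. -/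
open Finset MvPolynomial

/-- In `ℝ[x₁, …, xₙ, (y_ℓ)_{ℓ ∈ L}]`: `z_ℓ = x_ℓ + y_ℓ` if `ℓ ∈ L` and `z_ℓ = x_ℓ`
otherwise. -/
noncomputable def z10 (n : ℕ) (L : Finset (Fin n)) (ℓ : Fin n) :
    MvPolynomial (Fin n ⊕ {i : Fin n // i ∈ L}) ℝ :=
  X (Sum.inl ℓ) + if h : ℓ ∈ L then X (Sum.inr ⟨ℓ, h⟩) else 0

/-- The `2n - p + 1` coefficients of the input-output equation of the cycle model with input
in compartment `1`, output in compartment `p`, and leak set `L`: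
`e₁(z), …, e_{n-1}(z)`, `eₙ(z) - x₁⋯xₙ`, `κ = x₁⋯x_{p-1}`, and
`eⱼ(z_{p+1}, …, zₙ)·κ` for `j = 1, …, n - p`. -/
noncomputable def coeffs10 (n p : ℕ) (L : Finset (Fin n)) (m : Fin (2 * n - p + 1)) :
    MvPolynomial (Fin n ⊕ {i : Fin n // i ∈ L}) ℝ :=
  if m.1 < n - 1 then esymOn Finset.univ (m.1 + 1) (z10 n L)
  else if m.1 = n - 1 then
    esymOn Finset.univ n (z10 n L) - ∏ i : Fin n, X (Sum.inl i)
  else if m.1 = n then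
    ∏ i ∈ Finset.univ.filter (fun i : Fin n => i.1 < p - 1), X (Sum.inl i)
  else
    esymOn (Finset.univ.filter (fun i : Fin n => p ≤ i.1)) (m.1 - n) (z10 n L) *
      ∏ i ∈ Finset.univ.filter (fun i : Fin n => i.1 < p - 1), X (Sum.inl i)

/-- The Jacobian matrix of the coefficient map of the cycle model, over the field of
rational functions in the `n + |L|` variables. -/
noncomputable def J10 (n p : ℕ) (L : Finset (Fin n)) :
    Matrix (Fin (2 * n - p + 1)) (Fin n ⊕ {i : Fin n // i ∈ L})
      (FractionRing (MvPolynomial (Fin n ⊕ {i : Fin n // i ∈ L}) ℝ)) :=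
  Matrix.of fun m v =>
    algebraMap (MvPolynomial (Fin n ⊕ {i : Fin n // i ∈ L}) ℝ)
      (FractionRing (MvPolynomial (Fin n ⊕ {i : Fin n // i ∈ L}) ℝ))
      (pderiv v (coeffs10 n p L m))

section Aux

variable {σ τ : Type*} {R : Type*} [CommRing R]

lemma pderiv_prod_congr (v1 v2 : σ) (t : Finset τ) (w : τ → MvPolynomial σ R)
    (h : ∀ ℓ, pderiv v1 (w ℓ) = pderiv v2 (w ℓ)) :
    pderiv v1 (∏ ℓ ∈ t, w ℓ) = pderiv v2 (∏ ℓ ∈ t, w ℓ) := by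
  induction t using Finset.cons_induction with
  | empty => simp
  | cons a s ha ih =>
    rw [Finset.prod_cons, pderiv_mul, pderiv_mul, h a, ih]

lemma pderiv_prod_zero (v : σ) (t : Finset τ) (w : τ → MvPolynomial σ R)
    (h : ∀ ℓ ∈ t, pderiv v (w ℓ) = 0) :
    pderiv v (∏ ℓ ∈ t, w ℓ) = 0 := by
  induction t using Finset.cons_induction with
  | empty => simp
  | cons a s ha ih =>
    rw [Finset.prod_cons, pderiv_mul, h a (Finset.mem_cons_self a s),
      ih fun ℓ hℓ => h ℓ (Finset.mem_cons_of_mem hℓ)]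
    ring

end Aux

lemma z10_pderiv_inl (n : ℕ) (L : Finset (Fin n)) (i ℓ : Fin n) :
    pderiv (Sum.inl i) (z10 n L ℓ) = if ℓ = i then 1 else 0 := by
  unfold z10
  rw [map_add]
  have hz : (pderiv (Sum.inl i)) (if h : ℓ ∈ L then
      (X (Sum.inr ⟨ℓ, h⟩) : MvPolynomial (Fin n ⊕ {x : Fin n // x ∈ L}) ℝ) else 0) = 0 := by
    split_ifs with hL
    · exact pderiv_X_of_ne (by simp)
    · simp
  rw [hz, add_zero]
  rcases eq_or_ne ℓ i with rfl | h
  · simp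
  · rw [pderiv_X_of_ne (by simp [h]), if_neg h]

lemma z10_pderiv_inr (n : ℕ) (L : Finset (Fin n)) (i ℓ : Fin n) (hi : i ∈ L) :
    pderiv (Sum.inr (⟨i, hi⟩ : {x : Fin n // x ∈ L})) (z10 n L ℓ) = if ℓ = i then 1 else 0 := by
  unfold z10
  rw [map_add, pderiv_X_of_ne (by simp), zero_add]
  rcases eq_or_ne ℓ i with rfl | h
  · rw [dif_pos hi, if_pos rfl, pderiv_X_self]
  · rw [if_neg h]
    split_ifs with hL
    · exact pderiv_X_of_ne (by simp [h])
    · simp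

lemma esym_deriv_eq (n : ℕ) (L : Finset (Fin n)) (i : Fin n) (hi : i ∈ L)
    (s : Finset (Fin n)) (m : ℕ) :
    pderiv (Sum.inl i) (esymOn s m (z10 n L)) =
      pderiv (Sum.inr (⟨i, hi⟩ : {x : Fin n // x ∈ L})) (esymOn s m (z10 n L)) := by
  unfold esymOn
  rw [map_sum, map_sum]
  refine Finset.sum_congr rfl fun t _ => ?_
  exact pderiv_prod_congr _ _ t _ fun ℓ => by
    rw [z10_pderiv_inl, z10_pderiv_inr]

lemma xprod_pderiv_inr (n : ℕ) (L : Finset (Fin n)) (u : {x : Fin n // x ∈ L})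
    (s : Finset (Fin n)) :
    pderiv (Sum.inr u) (∏ ℓ ∈ s, (X (Sum.inl ℓ) :
      MvPolynomial (Fin n ⊕ {i : Fin n // i ∈ L}) ℝ)) = 0 :=
  pderiv_prod_zero _ _ _ fun ℓ _ => pderiv_X_of_ne (by simp)

lemma xprod_pderiv_inl_notMem (n : ℕ) (L : Finset (Fin n)) (i : Fin n)
    (s : Finset (Fin n)) (hi : i ∉ s) :
    pderiv (Sum.inl i) (∏ ℓ ∈ s, (X (Sum.inl ℓ) :
      MvPolynomial (Fin n ⊕ {i : Fin n // i ∈ L}) ℝ)) = 0 :=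
  pderiv_prod_zero _ _ _ fun ℓ hℓ =>
    pderiv_X_of_ne (by simp; rintro rfl; exact hi hℓ)

lemma xprod_pderiv_univ (n : ℕ) (L : Finset (Fin n)) (i : Fin n) :
    pderiv (Sum.inl i) (∏ ℓ : Fin n, (X (Sum.inl ℓ) :
      MvPolynomial (Fin n ⊕ {i : Fin n // i ∈ L}) ℝ)) =
      ∏ ℓ ∈ Finset.univ.erase i, (X (Sum.inl ℓ) :
        MvPolynomial (Fin n ⊕ {i : Fin n // i ∈ L}) ℝ) := by
  rw [← Finset.mul_prod_erase _ _ (Finset.mem_univ i), pderiv_mul, pderiv_X_self, one_mul,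
    xprod_pderiv_inl_notMem n L i _ (Finset.notMem_erase i _), mul_zero, add_zero]

lemma keypoly (n p : ℕ) (hp1 : 1 ≤ p)
    (L : Finset (Fin n)) (i j : Fin n) (hi : i ∈ L) (hj : j ∈ L)
    (hip : p ≤ i.1 + 1) (hjp : p ≤ j.1 + 1) (m : Fin (2 * n - p + 1)) :
    X (Sum.inl i) * pderiv (Sum.inl i) (coeffs10 n p L m)
      - X (Sum.inl i) * pderiv (Sum.inr (⟨i, hi⟩ : {x : Fin n // x ∈ L})) (coeffs10 n p L m)
    = X (Sum.inl j) * pderiv (Sum.inl j) (coeffs10 n p L m)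
      - X (Sum.inl j) * pderiv (Sum.inr (⟨j, hj⟩ : {x : Fin n // x ∈ L})) (coeffs10 n p L m) := by
  unfold coeffs10
  split_ifs with h1 h2 h3
  · rw [esym_deriv_eq n L i hi, esym_deriv_eq n L j hj, sub_self, sub_self]
  · rw [map_sub, map_sub, map_sub, map_sub,
      esym_deriv_eq n L i hi, esym_deriv_eq n L j hj,
      xprod_pderiv_inr, xprod_pderiv_inr,
      xprod_pderiv_univ, xprod_pderiv_univ]
    have hXi : (X (Sum.inl i) : MvPolynomial (Fin n ⊕ {x : Fin n // x ∈ L}) ℝ) *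
        ∏ ℓ ∈ Finset.univ.erase i, X (Sum.inl ℓ) = ∏ ℓ : Fin n, X (Sum.inl ℓ) :=
      Finset.mul_prod_erase _ (fun ℓ : Fin n =>
        (X (Sum.inl ℓ) : MvPolynomial (Fin n ⊕ {x : Fin n // x ∈ L}) ℝ)) (Finset.mem_univ i)
    have hXj : (X (Sum.inl j) : MvPolynomial (Fin n ⊕ {x : Fin n // x ∈ L}) ℝ) *
        ∏ ℓ ∈ Finset.univ.erase j, X (Sum.inl ℓ) = ∏ ℓ : Fin n, X (Sum.inl ℓ) :=
      Finset.mul_prod_erase _ (fun ℓ : Fin n =>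
        (X (Sum.inl ℓ) : MvPolynomial (Fin n ⊕ {x : Fin n // x ∈ L}) ℝ)) (Finset.mem_univ j)
    rw [mul_sub, mul_sub, mul_sub, mul_sub, hXi, hXj]
    ring
  · have hzi : i ∉ Finset.univ.filter (fun ℓ : Fin n => ℓ.1 < p - 1) := by
      simp only [Finset.mem_filter, Finset.mem_univ, true_and]; omega
    have hzj : j ∉ Finset.univ.filter (fun ℓ : Fin n => ℓ.1 < p - 1) := by
      simp only [Finset.mem_filter, Finset.mem_univ, true_and]; omega
    rw [xprod_pderiv_inl_notMem n L i _ hzi, xprod_pderiv_inl_notMem n L j _ hzj,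
      xprod_pderiv_inr, xprod_pderiv_inr]
    ring
  · have hzi : i ∉ Finset.univ.filter (fun ℓ : Fin n => ℓ.1 < p - 1) := by
      simp only [Finset.mem_filter, Finset.mem_univ, true_and]; omega
    have hzj : j ∉ Finset.univ.filter (fun ℓ : Fin n => ℓ.1 < p - 1) := by
      simp only [Finset.mem_filter, Finset.mem_univ, true_and]; omega
    rw [pderiv_mul, pderiv_mul, pderiv_mul, pderiv_mul,
      xprod_pderiv_inl_notMem n L i _ hzi, xprod_pderiv_inl_notMem n L j _ hzj,
      xprod_pderiv_inr, xprod_pderiv_inr,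
      esym_deriv_eq n L i hi, esym_deriv_eq n L j hj]
    ring

/-- If the leak set `L` contains two distinct compartments `i, j` with (1-based) index at
least `p`, then the Jacobian of the coefficient map has rank strictly less than `n + |L|`;
in fact the four columns corresponding to `x_i, y_i, x_j, y_j` are linearly dependent. -/
theorem stmt10 (n p : ℕ) (hn : 3 ≤ n) (hp1 : 1 ≤ p) (hpn : p ≤ n)
    (L : Finset (Fin n)) (i j : Fin n) (hi : i ∈ L) (hj : j ∈ L) (hij : i ≠ j)
    (hip : p ≤ i.1 + 1) (hjp : p ≤ j.1 + 1) :
    (J10 n p L).rank < n + L.card ∧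
    ¬ LinearIndependent (FractionRing (MvPolynomial (Fin n ⊕ {i : Fin n // i ∈ L}) ℝ))
        ![fun m => J10 n p L m (Sum.inl i), fun m => J10 n p L m (Sum.inr ⟨i, hi⟩),
          fun m => J10 n p L m (Sum.inl j), fun m => J10 n p L m (Sum.inr ⟨j, hj⟩)] := by
  set R := MvPolynomial (Fin n ⊕ {i : Fin n // i ∈ L}) ℝ
  set K := FractionRing R
  set φ := algebraMap R K with hφ
  have hinj : Function.Injective φ := IsFractionRing.injective R K
  have hXi : φ (X (Sum.inl i)) ≠ 0 := fun h =>
    MvPolynomial.X_ne_zero _ (hinj (by rw [h, map_zero]))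
  -- the linear combination vanishes
  have hcomb : ∀ m : Fin (2 * n - p + 1),
      φ (X (Sum.inl i)) * J10 n p L m (Sum.inl i)
        + (-(φ (X (Sum.inl i)))) * J10 n p L m (Sum.inr ⟨i, hi⟩)
        + (-(φ (X (Sum.inl j)))) * J10 n p L m (Sum.inl j)
        + φ (X (Sum.inl j)) * J10 n p L m (Sum.inr ⟨j, hj⟩) = 0 := by
    intro m
    have h := congrArg φ (keypoly n p hp1 L i j hi hj hip hjp m)
    simp only [map_sub, map_mul] at h
    show φ (X (Sum.inl i)) * φ (pderiv (Sum.inl i) (coeffs10 n p L m))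
        + (-(φ (X (Sum.inl i)))) * φ (pderiv (Sum.inr ⟨i, hi⟩) (coeffs10 n p L m))
        + (-(φ (X (Sum.inl j)))) * φ (pderiv (Sum.inl j) (coeffs10 n p L m))
        + φ (X (Sum.inl j)) * φ (pderiv (Sum.inr ⟨j, hj⟩) (coeffs10 n p L m)) = 0
    linear_combination h
  -- the four columns are dependent
  have hdep4 : ¬ LinearIndependent K
      ![fun m => J10 n p L m (Sum.inl i), fun m => J10 n p L m (Sum.inr ⟨i, hi⟩),
        fun m => J10 n p L m (Sum.inl j), fun m => J10 n p L m (Sum.inr ⟨j, hj⟩)] := by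
    rw [Fintype.not_linearIndependent_iff]
    refine ⟨![φ (X (Sum.inl i)), -(φ (X (Sum.inl i))), -(φ (X (Sum.inl j))), φ (X (Sum.inl j))],
      ?_, 0, by simpa using hXi⟩
    funext m
    have := hcomb m
    simp only [Fin.sum_univ_four, Matrix.cons_val_zero, Matrix.cons_val_one, Matrix.head_cons,
      Matrix.cons_val_two, Matrix.tail_cons, Matrix.cons_val_three, Pi.add_apply, Pi.smul_apply,
      smul_eq_mul, Pi.zero_apply]
    exact this
  refine ⟨?_, hdep4⟩
  -- rank bound
  have hnotli : ¬ LinearIndependent K (J10 n p L).transpose := by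
    intro hLI
    have einj : Function.Injective
        (![Sum.inl i, Sum.inr ⟨i, hi⟩, Sum.inl j, Sum.inr ⟨j, hj⟩] :
          Fin 4 → (Fin n ⊕ {x : Fin n // x ∈ L})) := by
      intro a b hab
      fin_cases a <;> fin_cases b <;>
        first
          | rfl
          | exact absurd (by simpa using hab) hij
          | exact absurd (by simpa using hab) hij.symm
          | simp at hab
    have := hLI.comp _ einj
    apply hdep4
    convert this using 1
    funext k
    fin_cases k <;> rfl
  have hcard : Fintype.card (Fin n ⊕ {x : Fin n // x ∈ L}) = n + L.card := by
    simp [Fintype.card_sum, Fintype.card_coe]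
  have hle : (J10 n p L).rank ≤ n + L.card := by
    rw [Matrix.rank_eq_finrank_span_cols, ← hcard]
    exact finrank_range_le_card _
  have hne : (J10 n p L).rank ≠ n + L.card := by
    rw [Matrix.rank_eq_finrank_span_cols]
    intro h
    exact hnotli (linearIndependent_iff_card_eq_finrank_span.mpr
      (by rw [hcard]; exact h.symm))
  exact lt_of_le_of_ne hle hne
end

section
/- Let n ≥ 3, 1 ≤ p ≤ n, and let L ⊆ {1, …, n} with t := |L| ≥ n−p+2. Let c : ℝ^{n+t} → ℝ^{2n−p+1} be the polynomial map whose coordinates, in the variables x_1, …, x_n and (y_ℓ)_{ℓ∈L} with z_ℓ = x_ℓ + y_ℓ for ℓ ∈ L and z_ℓ = x_ℓ otherwise, are: e_m(z_1, …, z_n) for m = 1, …, n−1; e_n(z_1, …, z_n) − x_1 x_2 ⋯ x_n; κ := x_1 x_2 ⋯ x_{p−1}; and e_j(z_{p+1}, …, z_n) · κ for j = 1, …, n−p, where e_m denotes the m-th elementary symmetric polynomial. Then for every nonempty open subset U of ℝ^{n+t}, the restriction of c to U is not injective. -/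
open Finset MvPolynomial

/-- In `ℝ[x₁, …, xₙ, (y_ℓ)_{ℓ ∈ L}]`: `z_ℓ = x_ℓ + y_ℓ` if `ℓ ∈ L` and `z_ℓ = x_ℓ`
otherwise. -/
noncomputable def z11 (n : ℕ) (L : Finset (Fin n)) (ℓ : Fin n) :
    MvPolynomial (Fin n ⊕ {i : Fin n // i ∈ L}) ℝ :=
  X (Sum.inl ℓ) + if h : ℓ ∈ L then X (Sum.inr ⟨ℓ, h⟩) else 0

/-- The `2n - p + 1` coordinates of the coefficient map of the cycle model with input in
compartment `1`, output in compartment `p`, and leak set `L`: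
`e₁(z), …, e_{n-1}(z)`, `eₙ(z) - x₁⋯xₙ`, `κ = x₁⋯x_{p-1}`, and
`eⱼ(z_{p+1}, …, zₙ)·κ` for `j = 1, …, n - p`. -/
noncomputable def coeffs11 (n p : ℕ) (L : Finset (Fin n)) (m : Fin (2 * n - p + 1)) :
    MvPolynomial (Fin n ⊕ {i : Fin n // i ∈ L}) ℝ :=
  if m.1 < n - 1 then esymOn Finset.univ (m.1 + 1) (z11 n L)
  else if m.1 = n - 1 then
    esymOn Finset.univ n (z11 n L) - ∏ i : Fin n, X (Sum.inl i)
  else if m.1 = n then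
    ∏ i ∈ Finset.univ.filter (fun i : Fin n => i.1 < p - 1), X (Sum.inl i)
  else
    esymOn (Finset.univ.filter (fun i : Fin n => p ≤ i.1)) (m.1 - n) (z11 n L) *
      ∏ i ∈ Finset.univ.filter (fun i : Fin n => i.1 < p - 1), X (Sum.inl i)

/-!
The model has `n + |L| ≥ 2n - p + 2` parameters but only `2n - p + 1` coefficients, and a `C¹`
map from a space of larger dimension is never injective on a nonempty open set. For the latter,
peel off one coordinate `f₀` of the map at a time: where the derivative of `f₀` vanishes
identically, `f₀` is locally constant and can be dropped; at a point where it does not vanish,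
the implicit function theorem parametrises the level set of `f₀` injectively by a space of one
dimension less, on which the remaining coordinates are again `C¹`.
-/

open Module Set Filter Topology

theorem IsOpen.exists_mem_ne {X : Type*} [TopologicalSpace X] {U : Set X} {a : X}
    [(𝓝[≠] a).NeBot] (hU : IsOpen U) (ha : a ∈ U) : ∃ b ∈ U, b ≠ a :=
  ((eventually_nhdsWithin_of_eventually_nhds (hU.mem_nhds ha)).and
    (self_mem_nhdsWithin : ∀ᶠ b in 𝓝[≠] a, b ≠ a)).exists

section

variable {E : Type*} [NormedAddCommGroup E] [NormedSpace ℝ E]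

theorem ContDiffAt.exists_injective_levelSet_param [CompleteSpace E] {g : E → ℝ} {a : E}
    (hg : ContDiffAt ℝ 1 g a) (hga : fderiv ℝ g a ≠ 0) :
    ∃ φ : (fderiv ℝ g a).ker → E, Function.Injective φ ∧ φ 0 = a ∧
      ContDiffAt ℝ 1 φ 0 ∧ ∀ᶠ k in 𝓝 0, g (φ k) = g a := by
  set ℓ := fderiv ℝ g a
  obtain ⟨w, hw⟩ : ∃ w, ℓ w ≠ 0 := by
    by_contra! h
    exact hga (ContinuousLinearMap.ext h)
  set K := ℓ.ker
  let e : K × ℝ →L[ℝ] E := K.subtypeL.coprod ((1 : ℝ →L[ℝ] ℝ).smulRight w)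
  have he (k : K) (t : ℝ) : e (k, t) = k + t • w := by simp [e]
  set h : K × ℝ → ℝ := fun p => g (a + e p)
  have hh : ContDiffAt ℝ 1 h 0 :=
    ContDiffAt.comp (g := g) _ (by simpa using hg) (by fun_prop)
  have hh' : HasFDerivAt h (ℓ ∘L e) 0 :=
    HasFDerivAt.comp (g := g) _ (by simpa using (hg.differentiableAt one_ne_zero).hasFDerivAt)
      (e.hasFDerivAt.const_add a)
  -- `t ↦ h (0, t)` has derivative `ℓ w ≠ 0`.
  have hinv : (fderiv ℝ h 0 ∘L ContinuousLinearMap.inr ℝ K ℝ).IsInvertible := by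
    refine ⟨ContinuousLinearEquiv.unitsEquivAut ℝ (Units.mk0 (ℓ w) hw), ?_⟩
    ext
    simp [hh'.fderiv, he]
  set ψ := hh.implicitFunction one_ne_zero hinv
  refine ⟨fun k => a + e (k, ψ k), fun k k' hkk' => ?_, ?_, ?_, ?_⟩
  · have hsum : (k : E) + ψ k • w = k' + ψ k' • w := by simpa [he] using hkk'
    have hψ : ψ k = ψ k' := by
      have hk : ℓ k = 0 := k.2
      have hk' : ℓ k' = 0 := k'.2
      have := congrArg ℓ hsum
      simp only [map_add, map_smul, smul_eq_mul, hk, hk', zero_add] at this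
      exact mul_right_cancel₀ hw this
    rw [hψ, add_left_inj] at hsum
    exact Subtype.ext hsum
  · have := hh.implicitFunction_apply_self one_ne_zero hinv
    rw [Prod.fst_zero, Prod.snd_zero] at this
    simp [ψ, he, this]
  · have := hh.contDiffAt_implicitFunction one_ne_zero hinv
    fun_prop
  · simpa [h] using hh.eventually_apply_implicitFunction one_ne_zero hinv

theorem ContDiffOn.not_injOn_of_lt_finrank [FiniteDimensional ℝ E] {M : ℕ}
    {f : E → Fin M → ℝ} {U : Set E} (hf : ContDiffOn ℝ 1 f U) (hU : IsOpen U)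
    (hne : U.Nonempty) (hM : M < finrank ℝ E) : ¬ InjOn f U := by
  induction M generalizing E with
  | zero =>
    have := Module.nontrivial_of_finrank_pos hM
    obtain ⟨a, ha⟩ := hne
    obtain ⟨b, hb, hba⟩ := hU.exists_mem_ne ha
    exact fun hinj => hba (hinj hb ha (Subsingleton.elim _ _))
  | succ M ih =>
    intro hinj
    set f₀ : E → ℝ := fun x => f x 0
    set f' : E → Fin M → ℝ := fun x => Fin.tail (f x)
    have hf₀ : ContDiffOn ℝ 1 f₀ U := contDiffOn_pi.1 hf 0
    have hf' : ContDiffOn ℝ 1 f' U := contDiffOn_pi.2 fun i => contDiffOn_pi.1 hf i.succ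
    have hext {x y : E} (h₀ : f₀ x = f₀ y) (h' : f' x = f' y) : f x = f y :=
      funext (Fin.cases h₀ (congrFun h'))
    by_cases hcrit : ∀ a ∈ U, fderiv ℝ f₀ a = 0
    · obtain ⟨a, ha⟩ := hne
      obtain ⟨r, hr, hball⟩ := Metric.isOpen_iff.1 hU a ha
      have hconst {x y : E} (hx : x ∈ Metric.ball a r) (hy : y ∈ Metric.ball a r) : f₀ x = f₀ y :=
        Metric.isOpen_ball.is_const_of_fderiv_eq_zero (convex_ball a r).isPreconnected
          ((hf₀.differentiableOn one_ne_zero).mono hball) (fun z hz => hcrit z (hball hz)) hx hy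
      exact ih (hf'.mono hball) Metric.isOpen_ball ⟨a, Metric.mem_ball_self hr⟩ (by omega)
        fun x hx y hy hxy => hinj (hball hx) (hball hy) (hext (hconst hx hy) hxy)
    · push Not at hcrit
      obtain ⟨a, ha, hda⟩ := hcrit
      obtain ⟨φ, hφinj, hφ0, hφ, hlevel⟩ :=
        (hf₀.contDiffAt (hU.mem_nhds ha)).exists_injective_levelSet_param hda
      have hK : M < finrank ℝ (fderiv ℝ f₀ a).ker := by
        have := Module.Dual.finrank_ker_add_one_of_ne_zero (f := (fderiv ℝ f₀ a : E →ₗ[ℝ] ℝ))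
          fun h => hda (ContinuousLinearMap.coe_injective h)
        exact Nat.lt_of_add_lt_add_right (this ▸ hM)
      have hev : ∀ᶠ k in 𝓝 0, ContDiffAt ℝ 1 (f' ∘ φ) k ∧ φ k ∈ U ∧ f₀ (φ k) = f₀ a := by
        rw [← hφ0] at ha
        exact ((hf'.contDiffAt (hU.mem_nhds ha)).comp 0 hφ |>.eventually (by simp)).and
          ((hφ.continuousAt.eventually_mem (hU.mem_nhds ha)).and hlevel)
      obtain ⟨V, hV, hVo, h0V⟩ := eventually_nhds_iff.1 hev
      refine ih (fun k hk => (hV k hk).1.contDiffWithinAt) hVo ⟨0, h0V⟩ hK ?_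
      intro k hk k' hk' hkk'
      exact hφinj (hinj (hV k hk).2.1 (hV k' hk').2.1
        (hext (by rw [(hV k hk).2.2, (hV k' hk').2.2]) hkk'))

theorem ContDiffOn.not_injOn_of_finrank_lt [FiniteDimensional ℝ E] {F : Type*}
    [NormedAddCommGroup F] [NormedSpace ℝ F] [FiniteDimensional ℝ F] {f : E → F} {U : Set E}
    (hf : ContDiffOn ℝ 1 f U) (hU : IsOpen U) (hne : U.Nonempty)
    (h : finrank ℝ F < finrank ℝ E) : ¬ InjOn f U := by
  let e : F ≃L[ℝ] (Fin (finrank ℝ F) → ℝ) := .ofFinrankEq (finrank_fin_fun ℝ).symm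
  exact fun hinj => (e.contDiff.comp_contDiffOn hf).not_injOn_of_lt_finrank hU hne h
    (e.injective.comp_injOn hinj)

end

theorem stmt11_general (n p : ℕ) (L : Finset (Fin n)) (hL : n - p + 2 ≤ L.card) :
    ∀ U : Set ((Fin n ⊕ {i : Fin n // i ∈ L}) → ℝ), IsOpen U → U.Nonempty →
      ¬ Set.InjOn
        (fun (v : (Fin n ⊕ {i : Fin n // i ∈ L}) → ℝ) (m : Fin (2 * n - p + 1)) =>
          MvPolynomial.eval v (coeffs11 n p L m)) U := by
  intro U hU hne
  refine ContDiffOn.not_injOn_of_finrank_lt ?_ hU hne ?_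
  · exact (contDiff_pi.2 fun m => (AnalyticOnNhd.eval_mvPolynomial _).contDiff).contDiffOn
  · simp only [finrank_pi, Fintype.card_sum, Fintype.card_fin, Fintype.card_coe]
    omega

/-- If the cycle model has at least `n - p + 2` leaks, then the (real-evaluated) coefficient
map is not injective on any nonempty open subset of the parameter space `ℝ^{n + |L|}`. -/
theorem stmt11 (n p : ℕ) (hn : 3 ≤ n) (hp1 : 1 ≤ p) (hpn : p ≤ n)
    (L : Finset (Fin n)) (hL : n - p + 2 ≤ L.card) :
    ∀ U : Set ((Fin n ⊕ {i : Fin n // i ∈ L}) → ℝ), IsOpen U → U.Nonempty →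
      ¬ Set.InjOn
        (fun (v : (Fin n ⊕ {i : Fin n // i ∈ L}) → ℝ) (m : Fin (2 * n - p + 1)) =>
          MvPolynomial.eval v (coeffs11 n p L m)) U :=
  stmt11_general n p L hL
end

section
/- Let n ≥ 3. Work in the polynomial ring R = ℝ[a_1, …, a_n, b_2, …, b_{n−1}], and set K_ℓ = b_ℓ + a_ℓ for 2 ≤ ℓ ≤ n−1 and K_n = a_n. Let M be the n×n matrix over R[X] with first row (X + a_1, −b_2, −b_3, …, −b_{n−1}, −a_n), diagonal entries M_{ℓ,ℓ} = X + K_ℓ for 2 ≤ ℓ ≤ n, subdiagonal entries M_{ℓ+1,ℓ} = −a_ℓ for 1 ≤ ℓ ≤ n−1, and all other entries 0. Then: (i) det(M) = (X + a_1) · ∏_{ℓ=2}^n (X + K_ℓ) − ∑_{j=2}^n P_j · ∏_{i=j+1}^n (X + K_i), where P_j = b_j · a_1 a_2 ⋯ a_{j−1} for 2 ≤ j ≤ n−1 and P_n = a_n · a_1 a_2 ⋯ a_{n−1}; and (ii) the determinant of the submatrix of M obtained by deleting row 1 and column 1 equals ∏_{ℓ=2}^n (X + K_ℓ). -/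
open Finset MvPolynomial

/-- Variables of the Fin model: `Sum.inl i` is `a_{i+1}` (the cycle rate `k_{i+2,i+1}`,
indices mod `n`) and `Sum.inr t` is `b_{t+2}` (the incoming-edge rate `k_{1,t+2}`).
`d13 n r` (for 0-based `r`, i.e. 1-based compartment `r+1`) is the diagonal offset:
`K_{r+1} = b_{r+1} + a_{r+1}` for 1-based index in `2, …, n-1`, and
`a_1` (resp. `aₙ`) for the first (resp. last) compartment. -/
noncomputable def d13 (n : ℕ) (r : Fin n) : MvPolynomial (Fin n ⊕ Fin (n - 2)) ℝ :=
  (if h : 1 ≤ r.1 ∧ r.1 < n - 1 then X (Sum.inr ⟨r.1 - 1, by omega⟩) else 0) + X (Sum.inl r)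

/-- The matrix `X•I - A` of the `n`-compartment Fin model with no leaks, over
`(ℝ[a, b])[X]`: first row `(X + a₁, -b₂, …, -b_{n-1}, -aₙ)`, diagonal entries `X + K_ℓ`,
subdiagonal entries `-a_ℓ`, all other entries `0`. -/
noncomputable def M13 (n : ℕ) :
    Matrix (Fin n) (Fin n) (Polynomial (MvPolynomial (Fin n ⊕ Fin (n - 2)) ℝ)) :=
  Matrix.of fun i j =>
    if i = j then Polynomial.X + Polynomial.C (d13 n j)
    else if i.1 = 0 then
      (if h : 1 ≤ j.1 ∧ j.1 < n - 1 then -Polynomial.C (X (R := ℝ) (σ := Fin n ⊕ Fin (n - 2)) (Sum.inr ⟨j.1 - 1, by omega⟩))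
       else if j.1 = n - 1 then -Polynomial.C (X (R := ℝ) (σ := Fin n ⊕ Fin (n - 2)) (Sum.inl j)) else 0)
    else if i.1 = j.1 + 1 then -Polynomial.C (X (R := ℝ) (σ := Fin n ⊕ Fin (n - 2)) (Sum.inl j))
    else 0

/-- `P_j = b_j · a₁ a₂ ⋯ a_{j-1}` for `2 ≤ j ≤ n-1`, and `P_n = aₙ · a₁ ⋯ a_{n-1}`
(1-based index `j`). -/
noncomputable def P13 (n : ℕ) (hn : 3 ≤ n) (j : ℕ) : MvPolynomial (Fin n ⊕ Fin (n - 2)) ℝ :=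
  (if h : j < n then
      (if h2 : 2 ≤ j then X (Sum.inr ⟨j - 2, by omega⟩) else 0)
    else X (Sum.inl ⟨n - 1, by omega⟩)) *
    ∏ i ∈ Finset.univ.filter (fun i : Fin n => i.1 < j - 1), X (Sum.inl i)

/-!
Expanding along the last column, a matrix whose nonzero entries lie on the diagonal `d`, the
subdiagonal `-s` and the first row `-c` has determinant
`∏ d_k - ∑_{j ≥ 1} c_j (s_0 ⋯ s_{j-1}) ∏_{k > j} d_k`: the cofactor of the top-right entry is
upper triangular with the subdiagonal on its diagonal, and that of the bottom-right entry is a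
matrix of the same shape one size smaller. For the Fin model `d` is `X + K_ℓ`, `s` the cycle
rates and `c` the rates of the edges into compartment `1`, so the summands are exactly
`P_j ∏_{i > j} (X + K_i)`; deleting the first row and column leaves a lower triangular matrix.
-/

section TopRowBidiagonal

variable {R : Type*} [CommRing R]

def topRowBidiagonal (d s c : ℕ → R) (n : ℕ) : Matrix (Fin n) (Fin n) R :=
  Matrix.of fun i j =>
    if i = j then d j else if i.1 = 0 then -c j else if i.1 = j.1 + 1 then -s j else 0

variable (d s c : ℕ → R)

lemma topRowBidiagonal_submatrix_castSucc (n : ℕ) :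
    (topRowBidiagonal d s c (n + 1)).submatrix Fin.castSucc Fin.castSucc =
      topRowBidiagonal d s c n := by
  ext i j
  simp only [topRowBidiagonal, Matrix.submatrix_apply, Matrix.of_apply, Fin.val_castSucc,
    Fin.castSucc_inj]

lemma det_topRowBidiagonal_submatrix_succ_castSucc (n : ℕ) :
    ((topRowBidiagonal d s c (n + 1)).submatrix Fin.succ Fin.castSucc).det =
      ∏ i ∈ range n, -s i := by
  rw [Matrix.det_of_isUpperTriangular, ← Fin.prod_univ_eq_prod_range]
  · refine prod_congr rfl fun i _ => ?_
    simp only [topRowBidiagonal, Matrix.submatrix_apply, Matrix.of_apply, Fin.val_succ,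
      Fin.val_castSucc, ← Fin.val_inj]
    simp
  · intro i j hij
    simp only [topRowBidiagonal, Matrix.submatrix_apply, Matrix.of_apply]
    split_ifs <;> simp [Fin.ext_iff] at * <;> omega

lemma det_topRowBidiagonal_submatrix_succ_succ (n : ℕ) :
    ((topRowBidiagonal d s c (n + 1)).submatrix Fin.succ Fin.succ).det =
      ∏ i ∈ range n, d (i + 1) := by
  rw [Matrix.det_of_isLowerTriangular, ← Fin.prod_univ_eq_prod_range]
  · simp [topRowBidiagonal]
  · intro i j hij
    simp only [topRowBidiagonal, Matrix.submatrix_apply, Matrix.of_apply]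
    split_ifs <;> simp [Fin.ext_iff] at * <;> omega

theorem det_topRowBidiagonal (n : ℕ) :
    (topRowBidiagonal d s c n).det =
      ∏ k ∈ range n, d k -
        ∑ j ∈ Ico 1 n, c j * (∏ i ∈ range j, s i) * ∏ k ∈ Ico (j + 1) n, d k := by
  induction n with
  | zero => simp
  | succ n ih =>
    rcases n with _ | n
    · simp [topRowBidiagonal]
    set A := topRowBidiagonal d s c (n + 2)
    have hcol : ∀ i, i ≠ 0 ∧ i ≠ Fin.last (n + 1) → A i (Fin.last (n + 1)) = 0 := by
      rintro i ⟨hi0, hil⟩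
      simp [A, topRowBidiagonal, hil, hi0]
      omega
    have hIco : ∑ j ∈ Ico 1 (n + 1), c j * (∏ i ∈ range j, s i) * ∏ k ∈ Ico (j + 1) (n + 2), d k =
        (∑ j ∈ Ico 1 (n + 1), c j * (∏ i ∈ range j, s i) * ∏ k ∈ Ico (j + 1) (n + 1), d k) *
          d (n + 1) := by
      rw [sum_mul]
      refine sum_congr rfl fun j hj => ?_
      rw [prod_Ico_succ_top (by simp at hj; omega)]
      ring
    have hsq : (-1 : R) ^ (n + 1) * (-1) ^ (n + 1) = 1 := by
      rw [← pow_add]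
      exact Even.neg_one_pow ⟨_, rfl⟩
    rw [Matrix.det_succ_column A (Fin.last (n + 1)),
      Fintype.sum_eq_add 0 (Fin.last (n + 1)) Fin.last_pos.ne (fun i hi => by simp [hcol i hi]),
      Fin.succAbove_zero, Fin.succAbove_last, det_topRowBidiagonal_submatrix_succ_castSucc,
      topRowBidiagonal_submatrix_castSucc, ih, prod_neg, card_range,
      prod_range_succ d (n + 1), sum_Ico_succ_top (show 1 ≤ n + 1 by omega), Ico_self, prod_empty,
      Even.neg_one_pow (⟨_, rfl⟩ : Even ((Fin.last (n + 1) : ℕ) + Fin.last (n + 1))), hIco]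
    simp [A, topRowBidiagonal, Fin.last_pos.ne]
    linear_combination -(c (n + 1) * ∏ i ∈ range (n + 1), s i) * hsq

end TopRowBidiagonal

section FinFilterProd

variable {M : Type*} [CommMonoid M] {n : ℕ} (g : ℕ → M)

lemma Fin.prod_filter_le_val (t : ℕ) :
    ∏ r ∈ univ.filter (fun r : Fin n => t ≤ r.1), g r = ∏ k ∈ Ico t n, g k := by
  rw [prod_filter, Fin.prod_univ_eq_prod_range (fun k => if t ≤ k then g k else 1), ← prod_filter]
  congr 1
  ext k
  simp [and_comm]

lemma Fin.prod_filter_val_lt {j : ℕ} (hj : j ≤ n) :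
    ∏ r ∈ univ.filter (fun r : Fin n => r.1 < j), g r = ∏ k ∈ range j, g k := by
  rw [prod_filter, Fin.prod_univ_eq_prod_range (fun k => if k < j then g k else 1), ← prod_filter]
  congr 1
  ext k
  simp
  omega

end FinFilterProd

section FinModel

variable (n : ℕ)

noncomputable def finModelDiag (k : ℕ) : Polynomial (MvPolynomial (Fin n ⊕ Fin (n - 2)) ℝ) :=
  if h : k < n then Polynomial.X + Polynomial.C (d13 n ⟨k, h⟩) else 0

noncomputable def finModelCycleRate (k : ℕ) :
    Polynomial (MvPolynomial (Fin n ⊕ Fin (n - 2)) ℝ) :=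
  if h : k < n then Polynomial.C (X (Sum.inl ⟨k, h⟩)) else 0

/-- The rate of the edge from compartment `k + 1` into compartment `1`: `b_{k+1}`, except that
the edge `n → 1` is the cycle edge, with rate `a_n`. -/
noncomputable def finModelInflowRate (k : ℕ) :
    Polynomial (MvPolynomial (Fin n ⊕ Fin (n - 2)) ℝ) :=
  if h : 1 ≤ k ∧ k < n - 1 then Polynomial.C (X (Sum.inr ⟨k - 1, by omega⟩))
  else finModelCycleRate n k

variable {n}

lemma finModelDiag_val (r : Fin n) :
    finModelDiag n r = Polynomial.X + Polynomial.C (d13 n r) := by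
  simp [finModelDiag]

lemma finModelCycleRate_val (r : Fin n) :
    finModelCycleRate n r = Polynomial.C (X (Sum.inl r)) := by
  simp [finModelCycleRate]

lemma M13_eq_topRowBidiagonal :
    M13 n = topRowBidiagonal (finModelDiag n) (finModelCycleRate n) (finModelInflowRate n) n := by
  ext i j
  simp only [M13, topRowBidiagonal, Matrix.of_apply, finModelDiag_val, finModelCycleRate_val,
    finModelInflowRate]
  split_ifs <;> first | rfl | omega

lemma C_P13_succ (hn : 3 ≤ n) {k : ℕ} (hk1 : 1 ≤ k) (hkn : k < n) :
    Polynomial.C (P13 n hn (k + 1)) =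
      finModelInflowRate n k * ∏ i ∈ range k, finModelCycleRate n i := by
  rw [P13, map_mul, map_prod, Nat.add_sub_cancel,
    prod_congr rfl fun r _ => (finModelCycleRate_val r).symm, Fin.prod_filter_val_lt _ hkn.le]
  congr 1
  unfold finModelInflowRate finModelCycleRate
  split_ifs <;> first | rfl | omega | (congr; omega)

end FinModel

/-- Determinant and `(1,1)`-minor for the Fin model:
(i) `det M = (X + a₁) ∏_{ℓ=2}^n (X + K_ℓ) - ∑_{j=2}^n P_j ∏_{i=j+1}^n (X + K_i)`, and
(ii) the determinant of the submatrix of `M` obtained by deleting row `1` and column `1`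
equals `∏_{ℓ=2}^n (X + K_ℓ)`. -/
theorem stmt13 (n : ℕ) (hn : 3 ≤ n) :
    (M13 n).det =
        (Polynomial.X + Polynomial.C (X (Sum.inl (⟨0, by omega⟩ : Fin n)))) *
          ∏ r ∈ Finset.univ.filter (fun r : Fin n => 1 ≤ r.1),
            (Polynomial.X + Polynomial.C (d13 n r)) -
        ∑ j ∈ Finset.Icc 2 n, Polynomial.C (P13 n hn j) *
          ∏ r ∈ Finset.univ.filter (fun r : Fin n => j ≤ r.1),
            (Polynomial.X + Polynomial.C (d13 n r)) ∧
    ((M13 n).submatrix (delIdx n 0) (delIdx n 0)).det =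
      ∏ r ∈ Finset.univ.filter (fun r : Fin n => 1 ≤ r.1),
        (Polynomial.X + Polynomial.C (d13 n r)) := by
  obtain ⟨m, rfl⟩ : ∃ m, n = m + 1 := ⟨n - 1, by omega⟩
  have hprod (t : ℕ) : ∏ r ∈ univ.filter (fun r : Fin (m + 1) => t ≤ r.1),
      (Polynomial.X + Polynomial.C (d13 (m + 1) r)) =
        ∏ k ∈ Ico t (m + 1), finModelDiag (m + 1) k := by
    simp only [← finModelDiag_val, Fin.prod_filter_le_val]
  have hdiag0 : finModelDiag (m + 1) 0 =
      Polynomial.X + Polynomial.C (X (Sum.inl ⟨0, by omega⟩)) := by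
    simp [finModelDiag, d13]
  have hdel : delIdx (m + 1) 0 = Fin.succ := funext fun k => if_neg (Nat.not_lt_zero _)
  simp only [hprod, hdel, M13_eq_topRowBidiagonal]
  refine ⟨?_, ?_⟩
  · have hterm (k : ℕ) (hk : k ∈ Ico 1 (m + 1)) :
        Polynomial.C (P13 (m + 1) hn (k + 1)) * ∏ j ∈ Ico (k + 1) (m + 1), finModelDiag (m + 1) j =
          finModelInflowRate (m + 1) k * (∏ i ∈ range k, finModelCycleRate (m + 1) i) *
            ∏ j ∈ Ico (k + 1) (m + 1), finModelDiag (m + 1) j := by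
      rw [C_P13_succ hn (mem_Ico.1 hk).1 (mem_Ico.1 hk).2]
    rw [det_topRowBidiagonal, prod_range_eq_mul_Ico _ (by omega), hdiag0,
      ← Ico_add_one_right_eq_Icc, ← sum_Ico_add' _ 1 (m + 1) 1, sum_congr rfl hterm]
  · rw [det_topRowBidiagonal_submatrix_succ_succ, prod_Ico_eq_prod_range, Nat.add_sub_cancel]
    simp only [add_comm 1]
end
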